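/- arXiv:math/0608261 — 7 statements merged into one kernel-verified Lean document; each statement's English description precedes it below -/
import Mathlib

section
/- Let k be a field and R = k[x,y]. Let 0 = a_0 < a_1 < ⋯ < a_r and b_0 > b_1 > ⋯ > b_r = 0 be integers satisfying b_0·a_i + a_r·b_i = a_r·b_0 for all i, let I = ⟨x^{a_0}y^{b_0}, …, x^{a_r}y^{b_r}⟩ ⊆ R, and let S = ⟨a_0, …, a_r⟩ and T = ⟨b_0, …, b_r⟩ be the numerical semigroups generated by the exponents. Then the Ratliff-Rush ideal associated to I is Ĩ = ⟨x^s y^u : s ∈ S, u ∈ ℕ, s ≤ a_r, b_0·s + a_r·u = a_r·b_0⟩ ∩ ⟨x^v y^t : t ∈ T, v ∈ ℕ, t ≤ b_0, b_0·v + a_r·t = a_r·b_0⟩, where Ĩ = ⋃_{l ≥ 1} (I^{l+1} : I^l). -/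
open MvPolynomial Finsupp Pointwise


section PartA
variable {K : Type*} [Field K] {σ : Type*}

lemma aux_image_monomial_add (S T : Set (σ →₀ ℕ)) :
    (fun e => monomial e (1:K)) '' (S + T)
      = ((fun e => monomial e (1:K)) '' S) * ((fun e => monomial e (1:K)) '' T) := by
  ext x
  simp only [Set.mem_image, Set.mem_mul, Set.mem_add]
  constructor
  · rintro ⟨e, ⟨s, hs, t, ht, rfl⟩, rfl⟩
    exact ⟨_, ⟨s, hs, rfl⟩, _, ⟨t, ht, rfl⟩, by rw [monomial_mul, one_mul]⟩
  · rintro ⟨_, ⟨s, hs, rfl⟩, _, ⟨t, ht, rfl⟩, rfl⟩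
    exact ⟨s + t, ⟨s, hs, t, ht, rfl⟩, by rw [monomial_mul, one_mul]⟩

lemma aux_mem_colon_span {R : Type*} [CommRing R] {J : Ideal R} {G : Set R} {f : R} :
    f ∈ J.colon (Ideal.span G) ↔ ∀ g ∈ G, f * g ∈ J := by
  rw [Submodule.mem_colon]
  constructor
  · intro h g hg
    simpa [smul_eq_mul] using h g (Ideal.subset_span hg)
  · intro h p hp
    have hle : Ideal.span G ≤ Submodule.comap (LinearMap.mulLeft R f) J := by
      rw [Ideal.span_le]
      intro g hg
      simpa [Submodule.mem_comap, LinearMap.mulLeft_apply] using h g hg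
    simpa [smul_eq_mul] using hle hp

lemma aux_support_mul_monomial (f : MvPolynomial σ K) (e : σ →₀ ℕ) :
    (f * monomial e 1).support = f.support.map (addRightEmbedding e) := by
  have := AddMonoidAlgebra.support_coeff_mul_single (G := (σ →₀ ℕ)) (k := K) f 1 (by simp) e
  rw [← MvPolynomial.single_eq_monomial]
  exact this

lemma aux_mul_monomial_mem_span_iff (f : MvPolynomial σ K) (e : σ →₀ ℕ) (S : Set (σ →₀ ℕ)) :
    f * monomial e 1 ∈ Ideal.span ((fun e => monomial e (1:K)) '' S) ↔
      ∀ x ∈ f.support, ∃ e' ∈ S, e' ≤ x + e := by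
  rw [mem_ideal_span_monomial_image, aux_support_mul_monomial]
  simp [addRightEmbedding_apply]

lemma aux_fin2_decomp (x : Fin 2 →₀ ℕ) :
    x = Finsupp.single 0 (x 0) + Finsupp.single 1 (x 1) := by
  ext j
  fin_cases j <;> simp

lemma aux_fin2_le {x y : Fin 2 →₀ ℕ} : x ≤ y ↔ x 0 ≤ y 0 ∧ x 1 ≤ y 1 := by
  rw [Finsupp.le_def]
  refine ⟨fun h => ⟨h 0, h 1⟩, fun h j => ?_⟩
  fin_cases j
  · exact h.1
  · exact h.2

end PartA

section Comb
variable {r : ℕ} (a : Fin (r + 1) → ℕ)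

def msum (M : Multiset (Fin (r + 1))) : ℕ := (M.map a).sum

@[simp] lemma msum_zero : msum a 0 = 0 := rfl

@[simp] lemma msum_cons (i : Fin (r + 1)) (M : Multiset (Fin (r + 1))) :
    msum a (i ::ₘ M) = a i + msum a M := by
  simp [msum]

@[simp] lemma msum_add (M N : Multiset (Fin (r + 1))) :
    msum a (M + N) = msum a M + msum a N := by
  simp [msum]

@[simp] lemma msum_replicate (n : ℕ) (i : Fin (r + 1)) :
    msum a (Multiset.replicate n i) = n * a i := by
  simp [msum, Multiset.map_replicate, Multiset.sum_replicate, smul_eq_mul]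

@[simp] lemma msum_singleton (i : Fin (r + 1)) : msum a {i} = a i := by
  simp [msum]

lemma msum_eq_sum_count (M : Multiset (Fin (r + 1))) :
    msum a M = ∑ i : Fin (r + 1), M.count i * a i := by
  induction M using Multiset.induction with
  | empty => simp
  | cons j M ih =>
      simp only [msum_cons, ih, Multiset.count_cons, add_mul, Finset.sum_add_distrib,
        ite_mul, one_mul, zero_mul, Finset.sum_ite_eq', Finset.mem_univ, if_true]
      ring

/-- every multiset can be normalized so that intermediate indices appear fewer than `A` times,
preserving cardinality and `msum`. -/
lemma msum_normalize (A : ℕ) (hA : 0 < A) (ha0 : a 0 = 0) (halast : a (Fin.last r) = A)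
    (haA : ∀ j, a j ≤ A) (M : Multiset (Fin (r + 1))) :
    ∃ N : Multiset (Fin (r + 1)), Multiset.card N = Multiset.card M ∧ msum a N = msum a M ∧
      ∀ i, i ≠ 0 → i ≠ Fin.last r → N.count i < A := by
  generalize hn : Multiset.card (M.filter (fun i => i ≠ 0 ∧ i ≠ Fin.last r)) = n
  induction n using Nat.strong_induction_on generalizing M with
  | _ n ih =>
    by_cases hall : ∀ i, i ≠ 0 → i ≠ Fin.last r → M.count i < A
    · exact ⟨M, rfl, rfl, hall⟩
    · push_neg at hall
      obtain ⟨i, hi0, hil, hiA⟩ := hall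
      have hrep : Multiset.replicate A i ≤ M := Multiset.le_count_iff_replicate_le.mp hiA
      obtain ⟨M₀, hM⟩ := Multiset.le_iff_exists_add.mp hrep
      set M₁ := Multiset.replicate (a i) (Fin.last r) + Multiset.replicate (A - a i) 0 + M₀
        with hM₁
      have hcard : Multiset.card M₁ = Multiset.card M := by
        rw [hM, hM₁]
        simp only [Multiset.card_add, Multiset.card_replicate]
        have := haA i
        omega
      have hsum : msum a M₁ = msum a M := by
        rw [hM, hM₁]
        simp only [msum_add, msum_replicate, halast, ha0]
        ring
      have hnil1 : Multiset.filter (fun i => i ≠ 0 ∧ i ≠ Fin.last r)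
          (Multiset.replicate (a i) (Fin.last r)) = 0 :=
        Multiset.filter_eq_nil.mpr (by
          intro j hj
          rw [Multiset.eq_of_mem_replicate hj]
          simp)
      have hnil2 : Multiset.filter (fun i => i ≠ 0 ∧ i ≠ Fin.last r)
          (Multiset.replicate (A - a i) (0 : Fin (r + 1))) = 0 :=
        Multiset.filter_eq_nil.mpr (by
          intro j hj
          rw [Multiset.eq_of_mem_replicate hj]
          simp)
      have hfilt1 : M₁.filter (fun i => i ≠ 0 ∧ i ≠ Fin.last r)
          = M₀.filter (fun i => i ≠ 0 ∧ i ≠ Fin.last r) := by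
        rw [hM₁, Multiset.filter_add, Multiset.filter_add, hnil1, hnil2]
        simp
      have hfilt2 : M.filter (fun i => i ≠ 0 ∧ i ≠ Fin.last r)
          = Multiset.replicate A i + M₀.filter (fun i => i ≠ 0 ∧ i ≠ Fin.last r) := by
        rw [hM, Multiset.filter_add, Multiset.filter_eq_self.mpr]
        intro j hj
        rw [Multiset.eq_of_mem_replicate hj]
        exact ⟨hi0, hil⟩
      have hlt : Multiset.card (M₁.filter (fun i => i ≠ 0 ∧ i ≠ Fin.last r)) < n := by
        rw [hfilt1, ← hn, hfilt2]
        simp only [Multiset.card_add, Multiset.card_replicate]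
        omega
      obtain ⟨N, h1, h2, h3⟩ := ih _ hlt M₁ rfl
      exact ⟨N, by rw [h1, hcard], by rw [h2, hsum], h3⟩


lemma card_le_msum (ha1 : ∀ i : Fin (r + 1), i ≠ 0 → 1 ≤ a i)
    (M : Multiset (Fin (r + 1))) (hM : ∀ i ∈ M, i ≠ 0) :
    Multiset.card M ≤ msum a M := by
  have : Multiset.card (M.map a) • 1 ≤ (M.map a).sum := by
    apply Multiset.card_nsmul_le_sum
    intro x hx
    obtain ⟨i, hi, rfl⟩ := Multiset.mem_map.mp hx
    exact ha1 i (hM i hi)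
  simpa [msum] using this

/-- drop all index-0 elements: the `msum` is unchanged and the cardinality is
bounded by the `msum` -/
lemma exists_short_rep (ha0 : a 0 = 0) (ha1 : ∀ i : Fin (r + 1), i ≠ 0 → 1 ≤ a i)
    (M : Multiset (Fin (r + 1))) :
    ∃ N : Multiset (Fin (r + 1)), msum a N = msum a M ∧ Multiset.card N ≤ msum a M := by
  have hsplit := Multiset.filter_add_not (fun i => i ≠ 0) M
  have h2 : msum a (M.filter (fun i => ¬ i ≠ 0)) = 0 := by
    rw [msum, Multiset.sum_eq_zero]
    intro x hx
    obtain ⟨i, hi, rfl⟩ := Multiset.mem_map.mp hx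
    have : i = 0 := by simpa using Multiset.of_mem_filter hi
    rw [this, ha0]
  have heq : msum a (M.filter (fun i => i ≠ 0)) = msum a M := by
    have := msum_add a (M.filter (fun i => i ≠ 0)) (M.filter (fun i => ¬ i ≠ 0))
    rw [hsplit, h2, add_zero] at this
    exact this.symm
  refine ⟨M.filter (fun i => i ≠ 0), heq, ?_⟩
  rw [← heq]
  exact card_le_msum a ha1 _ (fun i hi => (Multiset.mem_filter.mp hi).2)


lemma msum_bound (A : ℕ) (ha0 : a 0 = 0) (haA : ∀ j, a j ≤ A)
    (N : Multiset (Fin (r + 1))) (hN : ∀ i, i ≠ 0 → i ≠ Fin.last r → N.count i < A) :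
    msum a N ≤ N.count (Fin.last r) * A + (r + 1) * (A * A) := by
  rw [msum_eq_sum_count]
  rw [← Finset.sum_erase_add Finset.univ _ (Finset.mem_univ (Fin.last r))]
  have h1 : ∑ i ∈ Finset.univ.erase (Fin.last r), N.count i * a i
      ≤ (Finset.univ.erase (Fin.last r)).card * (A * A) := by
    have := Finset.sum_le_card_nsmul (Finset.univ.erase (Fin.last r))
      (fun i => N.count i * a i) (A * A) ?_
    · simpa [smul_eq_mul] using this
    · intro i hi
      have hil : i ≠ Fin.last r := (Finset.mem_erase.mp hi).1
      by_cases hi0 : i = 0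
      · simp [hi0, ha0]
      · exact Nat.mul_le_mul (le_of_lt (hN i hi0 hil)) (haA i)
  have h2 : (Finset.univ.erase (Fin.last r)).card ≤ r + 1 := by
    calc (Finset.univ.erase (Fin.last r)).card ≤ Finset.univ.card :=
          Finset.card_le_card (Finset.erase_subset _ _)
      _ = r + 1 := by simp
  have h3 : N.count (Fin.last r) * a (Fin.last r) ≤ N.count (Fin.last r) * A :=
    Nat.mul_le_mul_left _ (haA _)
  have h4 : (Finset.univ.erase (Fin.last r)).card * (A * A) ≤ (r + 1) * (A * A) :=
    Nat.mul_le_mul_right _ h2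
  omega

theorem comb_main (A B : ℕ) (hA : 0 < A) (hB : 0 < B)
    (ha0 : a 0 = 0) (halast : a (Fin.last r) = A) (haA : ∀ i, a i ≤ A)
    (hainj : ∀ i, a i = 0 → i = 0) (p q : ℕ) :
    (∃ l, 1 ≤ l ∧ ∀ M : Multiset (Fin (r + 1)), Multiset.card M = l →
        ∃ M' : Multiset (Fin (r + 1)), Multiset.card M' = l + 1 ∧
          msum a M' ≤ p + msum a M ∧ A * B + B * msum a M ≤ A * q + B * msum a M')
    ↔ ((∃ M1 : Multiset (Fin (r + 1)),
          msum a M1 ≤ A ∧ msum a M1 ≤ p ∧ A * B ≤ A * q + B * msum a M1)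
      ∧ (∃ (M2 : Multiset (Fin (r + 1))) (v : ℕ),
          v + Multiset.card M2 * A = A + msum a M2 ∧ v ≤ p ∧
          Multiset.card M2 * (A * B) ≤ A * q + B * msum a M2)) := by
  have ha1 : ∀ i : Fin (r + 1), i ≠ 0 → 1 ≤ a i := by
    intro i hi
    rcases Nat.eq_zero_or_pos (a i) with h | h
    · exact absurd (hainj i h) hi
    · exact h
  constructor
  · rintro ⟨l, hl1, h⟩
    constructor
    · -- use M = replicate l 0
      obtain ⟨M', hc', hle', hge'⟩ := h (Multiset.replicate l 0) (by simp)
      rw [msum_replicate, ha0, Nat.mul_zero] at hle' hge'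
      by_cases hcase : msum a M' ≤ A
      · exact ⟨M', hcase, by omega, by omega⟩
      · refine ⟨{Fin.last r}, by simp [halast], ?_, ?_⟩
        · simp only [msum_singleton, halast]
          omega
        · simp only [msum_singleton, halast]
          calc A * B = B * A := Nat.mul_comm _ _
            _ ≤ A * q + B * A := Nat.le_add_left _ _
    · -- use M = replicate l last
      obtain ⟨M', hc', hle', hge'⟩ := h (Multiset.replicate l (Fin.last r)) (by simp)
      rw [msum_replicate, halast] at hle' hge'
      by_cases hcase : l * A ≤ msum a M'
      · refine ⟨M', msum a M' - l * A, ?_, by omega, ?_⟩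
        · rw [hc']
          have : (l + 1) * A = l * A + A := by ring
          omega
        · rw [hc']
          have h1 : (l + 1) * (A * B) = A * B + B * (l * A) := by ring
          omega
      · refine ⟨{(0 : Fin (r + 1))}, 0, by simp [ha0], Nat.zero_le _, ?_⟩
        simp only [Multiset.card_singleton, msum_singleton, ha0, Nat.mul_zero, one_mul,
          Nat.add_zero]
        have h1 : B * msum a M' + B ≤ B * (l * A) := by
          have : msum a M' + 1 ≤ l * A := by omega
          calc B * msum a M' + B = B * (msum a M' + 1) := by ring
            _ ≤ B * (l * A) := Nat.mul_le_mul_left _ this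
        omega
  · rintro ⟨⟨M1, hM1A, hM1p, hM1q⟩, ⟨M2, v, hveq, hvp, hM2q⟩⟩
    set m := Multiset.card M1 with hm
    set n := Multiset.card M2 with hn2
    set σ := msum a M2 with hσ
    refine ⟨n * A + (r + 1) * (A * A) + m + 1, by omega, ?_⟩
    intro M hMcard
    obtain ⟨N, hNcard, hNsum, hNnorm⟩ := msum_normalize a A hA ha0 halast haA M
    set k := N.count (Fin.last r) with hk
    by_cases hkn : n ≤ k
    · -- swap case
      have hrep : Multiset.replicate n (Fin.last r) ≤ N :=
        Multiset.le_count_iff_replicate_le.mp hkn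
      obtain ⟨N₀, hN₀⟩ := Multiset.le_iff_exists_add.mp hrep
      refine ⟨N₀ + M2 + {Fin.last r}, ?_, ?_, ?_⟩
      · have : Multiset.card N = n + Multiset.card N₀ := by
          rw [hN₀]; simp
        simp only [Multiset.card_add, Multiset.card_singleton]
        omega
      · have hsN : msum a N = n * A + msum a N₀ := by
          rw [hN₀]; simp [halast]
        have hgoal : msum a (N₀ + M2 + {Fin.last r}) = msum a N₀ + σ + A := by
          simp [halast, hσ]
        rw [hgoal, ← hNsum, hsN]
        omega
      · have hsN : msum a N = n * A + msum a N₀ := by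
          rw [hN₀]; simp [halast]
        have hgoal : msum a (N₀ + M2 + {Fin.last r}) = msum a N₀ + σ + A := by
          simp [halast, hσ]
        rw [hgoal, ← hNsum, hsN]
        have e1 : B * (n * A + msum a N₀) = n * (A * B) + B * msum a N₀ := by ring
        have e2 : B * (msum a N₀ + σ + A) = B * msum a N₀ + B * σ + A * B := by ring
        omega
    · -- short representation case
      push_neg at hkn
      have hbound : msum a M ≤ k * A + (r + 1) * (A * A) := by
        rw [← hNsum]
        exact msum_bound a A ha0 haA N hNnorm
      obtain ⟨N₁, hN₁sum, hN₁card⟩ := exists_short_rep a ha0 ha1 M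
      have hcard_le : Multiset.card N₁ + m + 1 ≤ n * A + (r + 1) * (A * A) + m + 1 := by
        have h5 : k * A + A ≤ n * A := by
          have : (k + 1) * A = k * A + A := by ring
          have h6 : (k + 1) * A ≤ n * A := Nat.mul_le_mul_right _ (by omega)
          omega
        omega
      refine ⟨N₁ + M1 + Multiset.replicate
          (n * A + (r + 1) * (A * A) + m + 1 + 1 - Multiset.card N₁ - m) 0, ?_, ?_, ?_⟩
      · simp only [Multiset.card_add, Multiset.card_replicate]
        omega
      · simp only [msum_add, msum_replicate, ha0, Nat.mul_zero, Nat.add_zero, hN₁sum]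
        rw [hMcard] at *
        omega
      · simp only [msum_add, msum_replicate, ha0, Nat.mul_zero, Nat.add_zero, hN₁sum]
        have e1 : B * (msum a M + msum a M1) = B * msum a M + B * msum a M1 := by ring
        omega

end Comb

section PartB
variable {K : Type*} [Field K] {σ : Type*} {ι : Type*}

def Eexp (v : ι → (σ →₀ ℕ)) (l : ℕ) : Set (σ →₀ ℕ) :=
  {e | ∃ M : Multiset ι, Multiset.card M = l ∧ (M.map v).sum = e}

lemma Eexp_one (v : ι → (σ →₀ ℕ)) : Eexp v 1 = Set.range v := by
  ext e
  constructor
  · rintro ⟨M, hM, rfl⟩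
    obtain ⟨i, rfl⟩ := Multiset.card_eq_one.mp hM
    exact ⟨i, by simp⟩
  · rintro ⟨i, rfl⟩
    exact ⟨{i}, by simp, by simp⟩

lemma Eexp_succ (v : ι → (σ →₀ ℕ)) (l : ℕ) : Eexp v (l + 1) = Eexp v 1 + Eexp v l := by
  ext e
  constructor
  · rintro ⟨M, hM, rfl⟩
    have hne : M ≠ 0 := by
      intro h
      rw [h] at hM
      simp at hM
    obtain ⟨i, hi⟩ := Multiset.exists_mem_of_ne_zero hne
    obtain ⟨M₀, rfl⟩ := Multiset.exists_cons_of_mem hi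
    refine Set.mem_add.mpr ⟨v i, ⟨{i}, by simp, by simp⟩, (M₀.map v).sum,
      ⟨M₀, by simpa using hM, rfl⟩, by simp⟩
  · intro he
    obtain ⟨x, ⟨M1, hM1, rfl⟩, y, ⟨M0, hM0, rfl⟩, rfl⟩ := Set.mem_add.mp he
    exact ⟨M1 + M0, by simp [hM1, hM0, Nat.add_comm], by simp⟩

lemma span_monomial_pow (v : ι → (σ →₀ ℕ)) (l : ℕ) :
    (Ideal.span ((fun e => monomial e (1:K)) '' Eexp v 1)) ^ l
      = Ideal.span ((fun e => monomial e (1:K)) '' Eexp v l) := by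
  induction l with
  | zero =>
      rw [pow_zero]
      have h0 : Eexp v 0 = {(0 : σ →₀ ℕ)} := by
        ext e
        constructor
        · rintro ⟨M, hM, rfl⟩
          rw [Multiset.card_eq_zero.mp hM]
          simp
        · intro he
          rw [Set.mem_singleton_iff] at he
          exact ⟨0, by simp, by simp [he]⟩
      have h1 : ((fun e => monomial e (1:K)) '' {(0 : σ →₀ ℕ)}) = {1} := by
        rw [Set.image_singleton, monomial_zero', C_1]
      rw [h0, h1, Ideal.span_singleton_one, Ideal.one_eq_top]
  | succ l ih =>
      rw [pow_succ', ih, Ideal.span_mul_span', ← aux_image_monomial_add, ← Eexp_succ]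

lemma aux_mem_colon_iff (v : ι → (σ →₀ ℕ)) (l : ℕ) (f : MvPolynomial σ K) :
    f ∈ (Ideal.span ((fun e => monomial e (1:K)) '' Eexp v (l+1))).colon
        (Ideal.span ((fun e => monomial e (1:K)) '' Eexp v l)) ↔
      ∀ x ∈ f.support, ∀ M : Multiset ι, Multiset.card M = l →
        ∃ M' : Multiset ι, Multiset.card M' = l + 1 ∧ (M'.map v).sum ≤ x + (M.map v).sum := by
  rw [aux_mem_colon_span]
  constructor
  · intro h x hx M hM
    have h2 := (aux_mul_monomial_mem_span_iff f ((M.map v).sum) _).mp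
      (h _ ⟨_, ⟨M, hM, rfl⟩, rfl⟩) x hx
    obtain ⟨e', ⟨M', hM', rfl⟩, hle⟩ := h2
    exact ⟨M', hM', hle⟩
  · rintro h g ⟨e, ⟨M, hM, rfl⟩, rfl⟩
    rw [aux_mul_monomial_mem_span_iff]
    intro x hx
    obtain ⟨M', h1, h2⟩ := h x hx M hM
    exact ⟨_, ⟨M', h1, rfl⟩, h2⟩

end PartB

section Misc

lemma exists_index_multiset {ι : Type*} (a : ι → ℕ) (s : Multiset ℕ)
    (h : ∀ y ∈ s, ∃ i, a i = y) : ∃ M : Multiset ι, M.map a = s := by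
  induction s using Multiset.induction with
  | empty => exact ⟨0, rfl⟩
  | cons y s ih =>
      obtain ⟨i, hi⟩ := h y (Multiset.mem_cons_self y s)
      obtain ⟨M, hM⟩ := ih (fun z hz => h z (Multiset.mem_cons_of_mem hz))
      exact ⟨i ::ₘ M, by rw [Multiset.map_cons, hM, hi]⟩

lemma exists_uniform_l {α : Type*} [DecidableEq α] (s : Finset α) (Q : ℕ → α → Prop)
    (mono : ∀ l x, Q l x → Q (l + 1) x) (h : ∀ x ∈ s, ∃ l, 1 ≤ l ∧ Q l x) :
    ∃ l, 1 ≤ l ∧ ∀ x ∈ s, Q l x := by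
  have mono' : ∀ x l l', l ≤ l' → Q l x → Q l' x := by
    intro x l l' hle hQ
    induction hle with
    | refl => exact hQ
    | step _ ih => exact mono _ _ ih
  induction s using Finset.induction with
  | empty => exact ⟨1, le_refl 1, by simp⟩
  | insert c s' hx ih =>
      obtain ⟨l1, hl1, hQ1⟩ := h c (Finset.mem_insert_self c s')
      obtain ⟨l2, hl2, hQ2⟩ := ih (fun x hxs => h x (Finset.mem_insert_of_mem hxs))
      refine ⟨max l1 l2, le_trans hl1 (le_max_left _ _), ?_⟩
      intro x hxs
      rcases Finset.mem_insert.mp hxs with rfl | hxs'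
      · exact mono' x l1 _ (le_max_left _ _) hQ1
      · exact mono' x l2 _ (le_max_right _ _) (hQ2 x hxs')

end Misc

/-- The Ratliff-Rush set associated to an ideal `I`: the union
`⋃_{l ≥ 1} (I^{l+1} : I^l)`. -/
def RRset {R : Type*} [CommRing R] (I : Ideal R) : Set R :=
  ⋃ l : ℕ, ⋃ (_ : 1 ≤ l), ((I ^ (l + 1)).colon ((I ^ l : Ideal R) : Set R) : Set R)

/-- with `0 = a_0 < ⋯ < a_r`, `b_0 > ⋯ > b_r = 0` satisfying
`b_0·a_i + a_r·b_i = a_r·b_0`, and `I = ⟨x^{a_i} y^{b_i}⟩ ⊆ k[x,y]`, the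
Ratliff-Rush ideal associated to `I` is
`Ĩ = ⟨x^s y^u : s ∈ S, s ≤ a_r, s/a_r + u/b_0 = 1⟩ ∩
     ⟨x^v y^t : t ∈ T, t ≤ b_0, v/a_r + t/b_0 = 1⟩`. -/
theorem stmt13 {K : Type*} [Field K] {r : ℕ} (hr : 1 ≤ r) (a b : Fin (r + 1) → ℕ)
    (ha0 : a 0 = 0) (hamono : StrictMono a)
    (hbr : b (Fin.last r) = 0) (hbanti : StrictAnti b)
    (hcond : ∀ i, b 0 * a i + a (Fin.last r) * b i = a (Fin.last r) * b 0)
    (I : Ideal (MvPolynomial (Fin 2) K))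
    (hI : I = Ideal.span (Set.range fun i => X 0 ^ a i * X 1 ^ b i)) :
    RRset I =
      ((Ideal.span {m : MvPolynomial (Fin 2) K | ∃ s u : ℕ,
          s ∈ AddSubmonoid.closure (Set.range a) ∧ s ≤ a (Fin.last r) ∧
          b 0 * s + a (Fin.last r) * u = a (Fin.last r) * b 0 ∧
          m = X 0 ^ s * X 1 ^ u} ⊓
        Ideal.span {m : MvPolynomial (Fin 2) K | ∃ t v : ℕ,
          t ∈ AddSubmonoid.closure (Set.range b) ∧ t ≤ b 0 ∧
          b 0 * v + a (Fin.last r) * t = a (Fin.last r) * b 0 ∧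
          m = X 0 ^ v * X 1 ^ t}) : Set (MvPolynomial (Fin 2) K)) := by
  classical
  set A := a (Fin.last r) with hAdef
  set B := b 0 with hBdef
  have h0last : (0 : Fin (r + 1)) < Fin.last r := by
    rw [Fin.lt_iff_val_lt_val]
    simp only [Fin.val_zero, Fin.val_last]
    omega
  have hA : 0 < A := by
    rw [hAdef, ← ha0]
    exact hamono h0last
  have hB : 0 < B := by
    rw [hBdef]
    have := hbanti h0last; omega
  have haA : ∀ i, a i ≤ A := fun i => hamono.monotone (Fin.le_last i)
  have hbB : ∀ i, b i ≤ B := fun i => hbanti.antitone (Fin.zero_le i)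
  have hainj : ∀ i, a i = 0 → i = 0 := fun i h => hamono.injective (h.trans ha0.symm)
  set v : Fin (r + 1) → (Fin 2 →₀ ℕ) :=
    fun i => Finsupp.single 0 (a i) + Finsupp.single 1 (b i) with hv
  have hv0 : ∀ i, v i 0 = a i := by
    intro i
    simp [hv, Finsupp.add_apply, Finsupp.single_apply]
  have hv1 : ∀ i, v i 1 = b i := by
    intro i
    simp [hv, Finsupp.add_apply, Finsupp.single_apply]
  have hsum0 : ∀ M : Multiset (Fin (r + 1)), ((M.map v).sum) 0 = msum a M := by
    intro M
    induction M using Multiset.induction with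
    | empty => simp
    | cons i M ih =>
        rw [Multiset.map_cons, Multiset.sum_cons, Finsupp.add_apply, ih, msum_cons, hv0]
  have hsum1 : ∀ M : Multiset (Fin (r + 1)), ((M.map v).sum) 1 = msum b M := by
    intro M
    induction M using Multiset.induction with
    | empty => simp
    | cons i M ih =>
        rw [Multiset.map_cons, Multiset.sum_cons, Finsupp.add_apply, ih, msum_cons, hv1]
  have hlineM : ∀ M : Multiset (Fin (r + 1)),
      B * msum a M + A * msum b M = Multiset.card M * (A * B) := by
    intro M
    induction M using Multiset.induction with
    | empty => simp
    | cons i M ih =>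
        simp only [msum_cons, Multiset.card_cons]
        have hc := hcond i
        have e1 : B * (a i + msum a M) = B * a i + B * msum a M := by ring
        have e2 : A * (b i + msum b M) = A * b i + A * msum b M := by ring
        have e3 : (Multiset.card M + 1) * (A * B) = Multiset.card M * (A * B) + A * B := by ring
        omega
  have hIeq : I = Ideal.span ((fun e => monomial e (1 : K)) '' Eexp v 1) := by
    rw [hI, Eexp_one]
    have hfun : (fun i : Fin (r + 1) => X (0 : Fin 2) ^ a i * X 1 ^ b i)
        = (fun e => monomial e (1 : K)) ∘ v := by
      funext i
      show X 0 ^ a i * X 1 ^ b i = monomial (v i) (1 : K)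
      rw [X_pow_eq_monomial, X_pow_eq_monomial, monomial_mul, one_mul]
    rw [hfun, Set.range_comp]
  have hIpow : ∀ l, I ^ l = Ideal.span ((fun e => monomial e (1 : K)) '' Eexp v l) := by
    intro l
    rw [hIeq, span_monomial_pow]
  -- translation of the second coordinate inequality
  have hswap : ∀ (l : ℕ) (M M' : Multiset (Fin (r + 1))) (q : ℕ),
      Multiset.card M = l → Multiset.card M' = l + 1 →
      (msum b M' ≤ q + msum b M ↔
        A * B + B * msum a M ≤ A * q + B * msum a M') := by
    intro l M M' q hM hM'
    have e1 := hlineM M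
    have e2 := hlineM M'
    rw [hM] at e1
    rw [hM'] at e2
    have e3 : (l + 1) * (A * B) = l * (A * B) + A * B := by ring
    constructor
    · intro h
      have h2 : A * msum b M' ≤ A * (q + msum b M) := Nat.mul_le_mul_left _ h
      have e4 : A * (q + msum b M) = A * q + A * msum b M := by ring
      omega
    · intro h
      have h2 : A * msum b M' ≤ A * (q + msum b M) := by
        have e4 : A * (q + msum b M) = A * q + A * msum b M := by ring
        omega
      exact Nat.le_of_mul_le_mul_left h2 hA
  -- characterization of membership in the colon ideal
  have hcolon : ∀ (l : ℕ) (f : MvPolynomial (Fin 2) K),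
      f ∈ (I ^ (l + 1)).colon ((I ^ l : Ideal (MvPolynomial (Fin 2) K)) : Set (MvPolynomial (Fin 2) K)) ↔
        ∀ x ∈ f.support, ∀ M : Multiset (Fin (r + 1)), Multiset.card M = l →
          ∃ M' : Multiset (Fin (r + 1)), Multiset.card M' = l + 1 ∧
            msum a M' ≤ x 0 + msum a M ∧
            A * B + B * msum a M ≤ A * (x 1) + B * msum a M' := by
    intro l f
    rw [hIpow, hIpow, aux_mem_colon_iff]
    refine forall_congr' fun x => forall_congr' fun hx => forall_congr' fun M =>
      forall_congr' fun hM => exists_congr fun M' => and_congr_right fun hM' => ?_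
    rw [aux_fin2_le, Finsupp.add_apply, Finsupp.add_apply, hsum0, hsum0, hsum1, hsum1,
      hswap l M M' (x 1) hM hM']
  -- membership characterization for the first span ideal
  have hJ1set : {m : MvPolynomial (Fin 2) K | ∃ s u : ℕ,
        s ∈ AddSubmonoid.closure (Set.range a) ∧ s ≤ A ∧
        B * s + A * u = A * B ∧ m = X 0 ^ s * X 1 ^ u}
      = (fun e => monomial e (1 : K)) '' {e : Fin 2 →₀ ℕ | ∃ s u : ℕ,
        s ∈ AddSubmonoid.closure (Set.range a) ∧ s ≤ A ∧
        B * s + A * u = A * B ∧ e = Finsupp.single 0 s + Finsupp.single 1 u} := by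
    ext m
    simp only [Set.mem_setOf_eq, Set.mem_image]
    constructor
    · rintro ⟨s, u, h1, h2, h3, rfl⟩
      exact ⟨_, ⟨s, u, h1, h2, h3, rfl⟩,
        by rw [X_pow_eq_monomial, X_pow_eq_monomial, monomial_mul, one_mul]⟩
    · rintro ⟨e, ⟨s, u, h1, h2, h3, rfl⟩, rfl⟩
      exact ⟨s, u, h1, h2, h3,
        by rw [X_pow_eq_monomial, X_pow_eq_monomial, monomial_mul, one_mul]⟩
  have hJ2set : {m : MvPolynomial (Fin 2) K | ∃ t w : ℕ,
        t ∈ AddSubmonoid.closure (Set.range b) ∧ t ≤ B ∧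
        B * w + A * t = A * B ∧ m = X 0 ^ w * X 1 ^ t}
      = (fun e => monomial e (1 : K)) '' {e : Fin 2 →₀ ℕ | ∃ t w : ℕ,
        t ∈ AddSubmonoid.closure (Set.range b) ∧ t ≤ B ∧
        B * w + A * t = A * B ∧ e = Finsupp.single 0 w + Finsupp.single 1 t} := by
    ext m
    simp only [Set.mem_setOf_eq, Set.mem_image]
    constructor
    · rintro ⟨t, w, h1, h2, h3, rfl⟩
      exact ⟨_, ⟨t, w, h1, h2, h3, rfl⟩,
        by rw [X_pow_eq_monomial, X_pow_eq_monomial, monomial_mul, one_mul]⟩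
    · rintro ⟨e, ⟨t, w, h1, h2, h3, rfl⟩, rfl⟩
      exact ⟨t, w, h1, h2, h3,
        by rw [X_pow_eq_monomial, X_pow_eq_monomial, monomial_mul, one_mul]⟩
  have hc0 : ∀ s u : ℕ, ((Finsupp.single (0 : Fin 2) s + Finsupp.single 1 u) : Fin 2 →₀ ℕ) 0
      = s := by
    intro s u
    simp [Finsupp.add_apply, Finsupp.single_apply]
  have hc1 : ∀ s u : ℕ, ((Finsupp.single (0 : Fin 2) s + Finsupp.single 1 u) : Fin 2 →₀ ℕ) 1
      = u := by
    intro s u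
    simp [Finsupp.add_apply, Finsupp.single_apply]
  have hmem1 : ∀ f : MvPolynomial (Fin 2) K,
      f ∈ Ideal.span {m : MvPolynomial (Fin 2) K | ∃ s u : ℕ,
        s ∈ AddSubmonoid.closure (Set.range a) ∧ s ≤ A ∧
        B * s + A * u = A * B ∧ m = X 0 ^ s * X 1 ^ u} ↔
      ∀ x ∈ f.support, ∃ M1 : Multiset (Fin (r + 1)),
        msum a M1 ≤ A ∧ msum a M1 ≤ x 0 ∧ A * B ≤ A * (x 1) + B * msum a M1 := by
    intro f
    rw [hJ1set, mem_ideal_span_monomial_image]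
    refine forall_congr' fun x => forall_congr' fun hx => ?_
    constructor
    · rintro ⟨e, ⟨s, u, h1, h2, h3, rfl⟩, hle⟩
      obtain ⟨sm, hsm, hssum⟩ := AddSubmonoid.exists_multiset_of_mem_closure h1
      obtain ⟨M1, hM1⟩ := exists_index_multiset a sm (fun y hy => hsm y hy)
      have hs : msum a M1 = s := by rw [msum, hM1, hssum]
      rw [aux_fin2_le, hc0, hc1] at hle
      refine ⟨M1, by rw [hs]; exact h2, by rw [hs]; exact hle.1, ?_⟩
      rw [hs]
      have h4 : A * u ≤ A * (x 1) := Nat.mul_le_mul_left _ hle.2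
      omega
    · rintro ⟨M1, h1, h2, h3⟩
      have hclos : msum a M1 ∈ AddSubmonoid.closure (Set.range a) := by
        rw [msum]
        refine AddSubmonoid.multiset_sum_mem _ _ (fun y hy => AddSubmonoid.subset_closure ?_)
        obtain ⟨i, _, rfl⟩ := Multiset.mem_map.mp hy
        exact ⟨i, rfl⟩
      have hu : ∃ u : ℕ, B * msum a M1 + A * u = A * B ∧ u ≤ x 1 := by
        have hline1 := hlineM M1
        have hsA : B * msum a M1 ≤ B * A := Nat.mul_le_mul_left _ h1
        cases hcard : Multiset.card M1 with
        | zero =>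
            have hM10 : M1 = 0 := Multiset.card_eq_zero.mp hcard
            have hs0 : msum a M1 = 0 := by rw [hM10]; rfl
            refine ⟨B, by rw [hs0]; ring, ?_⟩
            rw [hs0] at h3
            have : A * B ≤ A * (x 1) := by omega
            exact Nat.le_of_mul_le_mul_left this hA
        | succ c =>
            rw [hcard] at hline1
            have e3 : (c + 1) * (A * B) = c * (A * B) + A * B := by ring
            have e4 : A * (c * B) = c * (A * B) := by ring
            have hcb : A * (c * B) ≤ A * msum b M1 := by
              have e5 : B * A = A * B := by ring
              omega
            have hcb2 : c * B ≤ msum b M1 := Nat.le_of_mul_le_mul_left hcb hA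
            refine ⟨msum b M1 - c * B, ?_, ?_⟩
            · have e6 : msum b M1 - c * B + c * B = msum b M1 := by omega
              have e7 : A * (msum b M1 - c * B) + A * (c * B) = A * msum b M1 := by
                rw [← Nat.mul_add, e6]
              omega
            · have e6 : msum b M1 - c * B + c * B = msum b M1 := by omega
              have e7 : A * (msum b M1 - c * B) + A * (c * B) = A * msum b M1 := by
                rw [← Nat.mul_add, e6]
              have h8 : A * (msum b M1 - c * B) ≤ A * (x 1) := by omega
              exact Nat.le_of_mul_le_mul_left h8 hA
      obtain ⟨u, hu1, hu2⟩ := hu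
      refine ⟨Finsupp.single 0 (msum a M1) + Finsupp.single 1 u,
        ⟨msum a M1, u, hclos, h1, hu1, rfl⟩, ?_⟩
      rw [aux_fin2_le, hc0, hc1]
      exact ⟨h2, hu2⟩
  have hmem2 : ∀ f : MvPolynomial (Fin 2) K,
      f ∈ Ideal.span {m : MvPolynomial (Fin 2) K | ∃ t w : ℕ,
        t ∈ AddSubmonoid.closure (Set.range b) ∧ t ≤ B ∧
        B * w + A * t = A * B ∧ m = X 0 ^ w * X 1 ^ t} ↔
      ∀ x ∈ f.support, ∃ (M2 : Multiset (Fin (r + 1))) (w : ℕ),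
        w + Multiset.card M2 * A = A + msum a M2 ∧ w ≤ x 0 ∧
        Multiset.card M2 * (A * B) ≤ A * (x 1) + B * msum a M2 := by
    intro f
    rw [hJ2set, mem_ideal_span_monomial_image]
    refine forall_congr' fun x => forall_congr' fun hx => ?_
    constructor
    · rintro ⟨e, ⟨t, w, h1, h2, h3, rfl⟩, hle⟩
      obtain ⟨sm, hsm, hssum⟩ := AddSubmonoid.exists_multiset_of_mem_closure h1
      obtain ⟨M2, hM2⟩ := exists_index_multiset b sm (fun y hy => hsm y hy)
      have ht : msum b M2 = t := by rw [msum, hM2, hssum]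
      rw [aux_fin2_le, hc0, hc1] at hle
      have hline2 := hlineM M2
      rw [ht] at hline2
      refine ⟨M2, w, ?_, hle.1, ?_⟩
      · -- B * (w + card * A) = B * (A + msum a M2), then cancel B
        have e1 : B * (w + Multiset.card M2 * A) = B * (A + msum a M2) := by
          have e2 : B * (w + Multiset.card M2 * A)
              = B * w + Multiset.card M2 * (A * B) := by ring
          have e3 : B * (A + msum a M2) = A * B + B * msum a M2 := by ring
          omega
        exact Nat.eq_of_mul_eq_mul_left hB e1
      · have h4 : A * t ≤ A * (x 1) := Nat.mul_le_mul_left _ hle.2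
        omega
    · rintro ⟨M2, w, h1, h2, h3⟩
      have hclos : msum b M2 ∈ AddSubmonoid.closure (Set.range b) := by
        rw [msum]
        refine AddSubmonoid.multiset_sum_mem _ _ (fun y hy => AddSubmonoid.subset_closure ?_)
        obtain ⟨i, _, rfl⟩ := Multiset.mem_map.mp hy
        exact ⟨i, rfl⟩
      have hline2 := hlineM M2
      have e1 : B * (w + Multiset.card M2 * A) = B * (A + msum a M2) := by rw [h1]
      have e2 : B * (w + Multiset.card M2 * A)
          = B * w + Multiset.card M2 * (A * B) := by ring
      have e3 : B * (A + msum a M2) = A * B + B * msum a M2 := by ring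
      have htB : msum b M2 ≤ B := by
        have h4 : A * msum b M2 ≤ A * B := by omega
        exact Nat.le_of_mul_le_mul_left h4 hA
      have htx : msum b M2 ≤ x 1 := by
        have h4 : A * msum b M2 ≤ A * (x 1) := by omega
        exact Nat.le_of_mul_le_mul_left h4 hA
      have hBw : B * w + A * msum b M2 = A * B := by omega
      refine ⟨Finsupp.single 0 w + Finsupp.single 1 (msum b M2),
        ⟨msum b M2, w, hclos, htB, hBw, rfl⟩, ?_⟩
      rw [aux_fin2_le, hc0, hc1]
      exact ⟨h2, htx⟩
  have hQmono : ∀ (l : ℕ) (x : Fin 2 →₀ ℕ),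
      (∀ M : Multiset (Fin (r + 1)), Multiset.card M = l →
        ∃ M' : Multiset (Fin (r + 1)), Multiset.card M' = l + 1 ∧
          msum a M' ≤ x 0 + msum a M ∧
          A * B + B * msum a M ≤ A * (x 1) + B * msum a M') →
      (∀ M : Multiset (Fin (r + 1)), Multiset.card M = l + 1 →
        ∃ M' : Multiset (Fin (r + 1)), Multiset.card M' = l + 1 + 1 ∧
          msum a M' ≤ x 0 + msum a M ∧
          A * B + B * msum a M ≤ A * (x 1) + B * msum a M') := by
    intro l x hQ M hM
    have hne : M ≠ 0 := by
      intro h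
      rw [h] at hM
      simp at hM
    obtain ⟨i, hi⟩ := Multiset.exists_mem_of_ne_zero hne
    obtain ⟨M₀, rfl⟩ := Multiset.exists_cons_of_mem hi
    have hM₀ : Multiset.card M₀ = l := by
      rw [Multiset.card_cons] at hM
      omega
    obtain ⟨M', hc', hle', hge'⟩ := hQ M₀ hM₀
    refine ⟨i ::ₘ M', by rw [Multiset.card_cons, hc'], ?_, ?_⟩
    · rw [msum_cons, msum_cons]
      omega
    · rw [msum_cons, msum_cons]
      have e1 : B * (a i + msum a M₀) = B * a i + B * msum a M₀ := by ring
      have e2 : B * (a i + msum a M') = B * a i + B * msum a M' := by ring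
      omega
  -- final assembly
  ext f
  have hfRR : f ∈ RRset I ↔ ∃ l, 1 ≤ l ∧ f ∈ (I ^ (l + 1)).colon ((I ^ l : Ideal (MvPolynomial (Fin 2) K)) : Set (MvPolynomial (Fin 2) K)) := by
    simp only [RRset, Set.mem_iUnion, SetLike.mem_coe]
    constructor
    · rintro ⟨l, hl, hf⟩
      exact ⟨l, hl, hf⟩
    · rintro ⟨l, hl, hf⟩
      exact ⟨l, hl, hf⟩
  rw [hfRR]
  simp only [Set.inf_eq_inter, Set.mem_inter_iff, SetLike.mem_coe]
  constructor
  · rintro ⟨l, hl, hf⟩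
    rw [hcolon] at hf
    constructor
    · rw [hmem1]
      intro x hx
      exact ((comb_main a A B hA hB ha0 rfl haA hainj (x 0) (x 1)).mp
        ⟨l, hl, hf x hx⟩).1
    · rw [hmem2]
      intro x hx
      exact ((comb_main a A B hA hB ha0 rfl haA hainj (x 0) (x 1)).mp
        ⟨l, hl, hf x hx⟩).2
  · rintro ⟨h1, h2⟩
    rw [hmem1] at h1
    rw [hmem2] at h2
    have hper : ∀ x ∈ f.support, ∃ l, 1 ≤ l ∧
        ∀ M : Multiset (Fin (r + 1)), Multiset.card M = l →
          ∃ M' : Multiset (Fin (r + 1)), Multiset.card M' = l + 1 ∧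
            msum a M' ≤ x 0 + msum a M ∧
            A * B + B * msum a M ≤ A * (x 1) + B * msum a M' := by
      intro x hx
      exact (comb_main a A B hA hB ha0 rfl haA hainj (x 0) (x 1)).mpr
        ⟨h1 x hx, h2 x hx⟩
    obtain ⟨l, hl, hall⟩ := exists_uniform_l f.support
      (fun l x => ∀ M : Multiset (Fin (r + 1)), Multiset.card M = l →
        ∃ M' : Multiset (Fin (r + 1)), Multiset.card M' = l + 1 ∧
          msum a M' ≤ x 0 + msum a M ∧
          A * B + B * msum a M ≤ A * (x 1) + B * msum a M')
      hQmono hper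
    exact ⟨l, hl, (hcolon l f).mpr hall⟩
end

section
/- Let k be a field and R = k[x,y]. Fix integers 0 = a_0 < a_1 < ⋯ < a_r = d (r ≥ 1), set b_i = d − a_i, and let I = ⟨x^{a_0}y^{b_0}, …, x^{a_r}y^{b_r}⟩ ⊆ R. If 2·a_1 ≥ d, then I is Ratliff-Rush, i.e., ⋃_{l ≥ 1} (I^{l+1} : I^l) = I. -/
open MvPolynomial

/-- with `I = ⟨x^{a_i} y^{b_i}⟩ ⊆ k[x,y]`, `0 = a_0 < ⋯ < a_r = d`,
`b_i = d − a_i`: if `2·a_1 ≥ d`, then `I` is Ratliff-Rush. -/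
theorem stmt14 {K : Type*} [Field K] {r : ℕ} (hr : 1 ≤ r) (d : ℕ)
    (a b : Fin (r + 1) → ℕ) (ha0 : a 0 = 0) (hmono : StrictMono a)
    (har : a (Fin.last r) = d) (hb : ∀ i, b i = d - a i)
    (ha1 : d ≤ 2 * a ⟨1, Nat.lt_succ_of_le hr⟩)
    (I : Ideal (MvPolynomial (Fin 2) K))
    (hI : I = Ideal.span (Set.range fun i => X 0 ^ a i * X 1 ^ b i)) :
    RRset I = (I : Set (MvPolynomial (Fin 2) K)) := by
  classical
  set one : Fin (r + 1) := ⟨1, Nat.lt_succ_of_le hr⟩ with hone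
  have had : ∀ i, a i ≤ d := fun i => har ▸ hmono.monotone (Fin.le_last i)
  have hab : ∀ i, a i + b i = d := fun i => by rw [hb]; have := had i; omega
  -- generator exponents
  set g : Fin (r + 1) → (Fin 2 →₀ ℕ) :=
    fun i => Finsupp.single 0 (a i) + Finsupp.single 1 (b i) with hg
  have hg0 : ∀ i, g i 0 = a i := by
    intro i; simp [hg, Finsupp.single_apply]
  have hg1 : ∀ i, g i 1 = b i := by
    intro i; simp [hg, Finsupp.single_apply]
  have hIg : I = Ideal.span ((fun s => monomial s (1 : K)) '' Set.range g) := by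
    have hfun : (fun i => X 0 ^ a i * X 1 ^ b i : Fin (r+1) → MvPolynomial (Fin 2) K)
        = (fun s => monomial s (1 : K)) ∘ g := by
      funext i
      simp [hg, Function.comp, X_pow_eq_monomial, monomial_mul]
    rw [hI, hfun, Set.range_comp]
  -- product of monomials
  have prod_mono : ∀ (n : ℕ) (f : Fin n → (Fin 2 →₀ ℕ)),
      (∏ k, monomial (f k) (1 : K)) = monomial (∑ k, f k) 1 := by
    intro n
    induction n with
    | zero => intro f; simp [MvPolynomial.monomial_zero']
    | succ n ih =>
      intro f
      rw [Fin.prod_univ_succ, Fin.sum_univ_succ, ih, monomial_mul, one_mul]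
  have hgmem : ∀ i, monomial (g i) (1 : K) ∈ I := by
    intro i
    rw [hIg]
    exact Ideal.subset_span ⟨g i, Set.mem_range_self i, rfl⟩
  -- membership of monomials of sum-exponents in powers
  have mem_pow : ∀ (n : ℕ) (c : Fin n → Fin (r + 1)),
      monomial (∑ k, g (c k)) (1 : K) ∈ I ^ n := by
    intro n c
    rw [← prod_mono n fun k => g (c k)]
    have h1 : (∏ k : Fin n, monomial (g (c k)) (1 : K)) ∈ ∏ _k : Fin n, I :=
      Ideal.prod_mem_prod fun i _ => hgmem (c i)
    rwa [Finset.prod_const, Finset.card_univ, Fintype.card_fin] at h1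
  -- powers are inside the span of sum-monomials
  have hpow_le : ∀ n : ℕ, I ^ n ≤ Ideal.span ((fun s => monomial s (1 : K)) ''
      {s | ∃ c : Fin n → Fin (r + 1), s = ∑ k, g (c k)}) := by
    intro n
    induction n with
    | zero =>
      have h1 : Ideal.span ((fun s => monomial s (1 : K)) ''
          {s | ∃ c : Fin 0 → Fin (r + 1), s = ∑ k, g (c k)}) = ⊤ := by
        refine (Ideal.eq_top_iff_one _).mpr (Ideal.subset_span ⟨0, ⟨Fin.elim0, by simp⟩, by simp⟩)
      rw [pow_zero, Ideal.one_eq_top]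
      exact h1.ge
    | succ n ih =>
      rw [pow_succ]
      refine le_trans (Ideal.mul_mono ih hIg.le) ?_
      rw [Ideal.span_mul_span, Ideal.span_le]
      rintro p hp
      rw [Set.mem_mul] at hp
      obtain ⟨x, hx, y, hy, rfl⟩ := hp
      obtain ⟨s, ⟨c, rfl⟩, rfl⟩ := hx
      obtain ⟨t, ⟨i, rfl⟩, rfl⟩ := hy
      refine Ideal.subset_span ⟨(∑ k, g (c k)) + g i, ⟨Fin.snoc c i, ?_⟩, ?_⟩
      · rw [Fin.sum_univ_castSucc]
        simp [Fin.snoc_castSucc, Fin.snoc_last]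
      · rw [monomial_mul, one_mul]
  -- the combinatorial key lemma
  have hge1 : ∀ i : Fin (r + 1), a i ≠ 0 → a one ≤ a i := by
    intro i hi
    rcases eq_or_ne i 0 with rfl | h
    · exact absurd ha0 hi
    · refine hmono.monotone ?_
      have := Fin.pos_of_ne_zero h
      rw [Fin.le_def]
      rw [Fin.lt_def] at this
      exact Nat.one_le_iff_ne_zero.mpr fun h' => h (Fin.ext (by simpa using h'))
  have key : ∀ (n : ℕ) (c : Fin n → Fin (r + 1)),
      (∑ k, a (c k)) < 2 * a one → ∃ j, ∑ k, a (c k) = a j := by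
    intro n
    induction n with
    | zero => intro c _; exact ⟨0, by simp [ha0]⟩
    | succ n ih =>
      intro c hlt
      rw [Fin.sum_univ_succ] at hlt ⊢
      have hlt2 : (∑ k : Fin n, a (c k.succ)) < 2 * a one := by omega
      obtain ⟨j, hj⟩ := ih (fun k => c k.succ) hlt2
      have hj' : (∑ k : Fin n, a (c k.succ)) = a j := hj
      rw [hj'] at hlt ⊢
      by_cases h0 : a (c 0) = 0
      · exact ⟨j, by omega⟩
      by_cases hj0 : a j = 0
      · exact ⟨c 0, by omega⟩
      · have h1 := hge1 _ h0
        have h2 := hge1 _ hj0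
        omega
  -- main direction
  have main : ∀ (l : ℕ) (z : MvPolynomial (Fin 2) K), 1 ≤ l →
      z ∈ (I ^ (l + 1)).colon ((I ^ l : Ideal (MvPolynomial (Fin 2) K)) : Set (MvPolynomial (Fin 2) K)) → z ∈ I := by
    intro l z hl hz
    set e : Fin 2 →₀ ℕ := Finsupp.single 1 (l * d) with he
    have hesum : e = ∑ _k : Fin l, g 0 := by
      rw [Finset.sum_const, Finset.card_univ, Fintype.card_fin]
      simp [he, hg, ha0, hb 0, Finsupp.smul_single, mul_comm]
    have hw : monomial e (1 : K) ∈ I ^ l := by rw [hesum]; exact mem_pow l fun _ => 0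
    have hzw : z * monomial e 1 ∈ I ^ (l + 1) := by
      have := Submodule.mem_colon.mp hz _ hw
      rwa [smul_eq_mul] at this
    have h2 := hpow_le (l + 1) hzw
    rw [mem_ideal_span_monomial_image] at h2
    rw [hIg, mem_ideal_span_monomial_image]
    intro μ hμ
    have hsupp : μ + e ∈ (z * monomial e 1).support := by
      rw [mem_support_iff, coeff_mul_monomial, mul_one]
      exact mem_support_iff.mp hμ
    obtain ⟨s, ⟨c, rfl⟩, hle⟩ := h2 _ hsupp
    have hle' := Finsupp.le_def.mp hle
    have hsum0 : (∑ k, g (c k)) 0 = ∑ k, a (c k) := by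
      rw [Finsupp.finset_sum_apply]
      exact Finset.sum_congr rfl fun k _ => hg0 (c k)
    have hsum1 : (∑ k, g (c k)) 1 = ∑ k, b (c k) := by
      rw [Finsupp.finset_sum_apply]
      exact Finset.sum_congr rfl fun k _ => hg1 (c k)
    have hT : ∑ k, a (c k) ≤ μ 0 := by
      have := hle' 0
      rw [hsum0] at this
      simpa [he, Finsupp.single_apply] using this
    have hB : ∑ k, b (c k) ≤ μ 1 + l * d := by
      have := hle' 1
      rw [hsum1] at this
      simpa [he, Finsupp.single_apply] using this
    have hTB : (∑ k, a (c k)) + (∑ k, b (c k)) = (l + 1) * d := by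
      rw [← Finset.sum_add_distrib]
      rw [Finset.sum_congr rfl fun k _ => hab (c k)]
      simp [Finset.card_univ]
    have hTB' : (∑ k, a (c k)) + (∑ k, b (c k)) = l * d + d := by rw [hTB]; ring
    by_cases hα : d ≤ μ 0
    · refine ⟨g (Fin.last r), Set.mem_range_self _, Finsupp.le_def.mpr ?_⟩
      rw [Fin.forall_fin_two]
      refine ⟨?_, ?_⟩
      · rw [hg0, har]; exact hα
      · rw [hg1, hb, har]; simp
    · push_neg at hα
      obtain ⟨j, hj⟩ := key (l + 1) c (by omega)
      refine ⟨g j, Set.mem_range_self _, Finsupp.le_def.mpr ?_⟩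
      rw [Fin.forall_fin_two]
      refine ⟨?_, ?_⟩
      · rw [hg0]; omega
      · rw [hg1, hb]; omega
  -- conclude
  ext z
  constructor
  · intro hz
    rw [RRset, Set.mem_iUnion] at hz
    obtain ⟨l, hz⟩ := hz
    rw [Set.mem_iUnion] at hz
    obtain ⟨hl, hz⟩ := hz
    exact main l z hl hz
  · intro hz
    rw [RRset, Set.mem_iUnion]
    refine ⟨1, ?_⟩
    rw [Set.mem_iUnion]
    refine ⟨le_refl 1, ?_⟩
    show z ∈ (I ^ 2).colon ((I ^ 1 : Ideal (MvPolynomial (Fin 2) K)) : Set (MvPolynomial (Fin 2) K))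
    rw [Submodule.mem_colon]
    intro p hp
    rw [pow_one] at hp
    rw [smul_eq_mul, pow_two]
    exact Ideal.mul_mem_mul hz hp
end

section
/- Let k be a field and R = k[x,y]. Let d > k ≥ 1 be integers and let I_{d,k} = ⟨y^d, x^{d−k}y^k, x^{d−k+1}y^{k−1}, …, x^{d−1}y, x^d⟩ ⊆ R. Then for every integer n ≥ 1 the power I_{d,k}^n is Ratliff-Rush, i.e., ⋃_{l ≥ 1} ((I_{d,k}^n)^{l+1} : (I_{d,k}^n)^l) = I_{d,k}^n. (In particular, taking k = 1, all powers of ⟨y^d, x^{d−1}y, x^d⟩ are Ratliff-Rush.) -/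
open MvPolynomial

namespace Stmt15Aux

/-- The exponent condition characterizing membership of a monomial `x^{s 0} y^{s 1}`
in `I_{d,k}^m`. -/
def P (d k m : ℕ) (s : Fin 2 →₀ ℕ) : Prop :=
  ∃ i, i ≤ m ∧ d * i ≤ s 1 ∧ (d - k) * (m - i) ≤ s 0 ∧ d * m ≤ s 0 + s 1

lemma P_mono {d k m : ℕ} {s t : Fin 2 →₀ ℕ} (h : P d k m s) (hst : s ≤ t) :
    P d k m t := by
  obtain ⟨i, h1, h2, h3, h4⟩ := h
  have e0 : s 0 ≤ t 0 := Finsupp.le_def.mp hst 0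
  have e1 : s 1 ≤ t 1 := Finsupp.le_def.mp hst 1
  exact ⟨i, h1, by omega, by omega, by omega⟩

lemma P_add {d k a b : ℕ} {s t : Fin 2 →₀ ℕ} (hs : P d k a s) (ht : P d k b t) :
    P d k (a + b) (s + t) := by
  obtain ⟨i, hia, h1, h2, h3⟩ := hs
  obtain ⟨i', hib, h1', h2', h3'⟩ := ht
  have e1 : d * (i + i') = d * i + d * i' := by ring
  have e2 : a + b - (i + i') = (a - i) + (b - i') := by omega
  have e3 : (d - k) * ((a - i) + (b - i')) = (d - k) * (a - i) + (d - k) * (b - i') := by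
    ring
  have e4 : d * (a + b) = d * a + d * b := by ring
  refine ⟨i + i', by omega, ?_, ?_, ?_⟩ <;>
    simp only [Finsupp.add_apply, e2] <;> omega

variable {K : Type*} [Field K]

lemma monomial_mem (d k : ℕ) (hk : 1 ≤ k) (hkd : k < d)
    (I : Ideal (MvPolynomial (Fin 2) K))
    (hI : I = Ideal.span ({X 1 ^ d} ∪
        {m : MvPolynomial (Fin 2) K | ∃ j : ℕ, j ≤ k ∧
          m = X 0 ^ (d - k + j) * X 1 ^ (k - j)})) :
    ∀ m (s : Fin 2 →₀ ℕ), P d k m s → monomial s (1 : K) ∈ I ^ m := by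
  intro m
  induction m with
  | zero => intro s _; simp [Ideal.one_eq_top]
  | succ m ih =>
    rintro s ⟨i, him, h1, h2, h3⟩
    have hdm : d * (m + 1) = d * m + d := by ring
    rcases i with _ | i
    · -- peel an x-generator
      have hdkm : (d - k) * (m + 1) = (d - k) * m + (d - k) := by ring
      have hmono : (d - k) * m ≤ d * m := Nat.mul_le_mul_right m (by omega)
      simp only [Nat.sub_zero] at h2
      -- choose j
      set j : ℕ := k - min k (s 1) with hjdef
      have hjk : j ≤ k := by omega
      have hj1 : k - j ≤ s 1 := by omega
      have hj0 : d - k + j ≤ s 0 := by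
        rcases le_or_gt k (s 1) with hc | hc
        · have : j = 0 := by omega
          omega
        · have : j = k - s 1 := by omega
          omega
      set g : Fin 2 →₀ ℕ := Finsupp.single 0 (d - k + j) + Finsupp.single 1 (k - j)
        with hgdef
      have hg0 : g 0 = d - k + j := by simp [hgdef, Finsupp.single_apply]
      have hg1 : g 1 = k - j := by simp [hgdef, Finsupp.single_apply]
      have hgs : g ≤ s := by
        rw [Finsupp.le_def]
        intro x
        fin_cases x
        · simpa [hg0] using hj0
        · simpa [hg1] using hj1
      have hsplit : g + (s - g) = s := add_tsub_cancel_of_le hgs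
      have hs0 : (s - g) 0 = s 0 - (d - k + j) := by
        simp [Finsupp.tsub_apply, hg0]
      have hs1 : (s - g) 1 = s 1 - (k - j) := by
        simp [Finsupp.tsub_apply, hg1]
      have hP : P d k m (s - g) := by
        refine ⟨0, Nat.zero_le _, by simp, ?_, ?_⟩
        · rw [hs0]
          simp only [Nat.sub_zero]
          rcases le_or_gt k (s 1) with hc | hc
          · have : j = 0 := by omega
            omega
          · have : j = k - s 1 := by omega
            omega
        · rw [hs0, hs1]
          omega
      have hgI : monomial g (1 : K) ∈ I := by
        rw [hI]
        refine Ideal.subset_span (Or.inr ⟨j, hjk, ?_⟩)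
        rw [X_pow_eq_monomial, X_pow_eq_monomial, monomial_mul, one_mul]
      have := Ideal.mul_mem_mul hgI (ih _ hP)
      rw [← pow_succ'] at this
      rw [monomial_mul, one_mul, hsplit] at this
      exact this
    · -- peel y^d
      have hdi : d * (i + 1) = d * i + d := by ring
      have hds : d ≤ s 1 := by omega
      set g : Fin 2 →₀ ℕ := Finsupp.single 1 d with hgdef
      have hg0 : g 0 = 0 := by simp [hgdef, Finsupp.single_apply]
      have hg1 : g 1 = d := by simp [hgdef]
      have hgs : g ≤ s := by
        rw [Finsupp.le_def]
        intro x
        fin_cases x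
        · simp [hg0]
        · simpa [hg1] using hds
      have hsplit : g + (s - g) = s := add_tsub_cancel_of_le hgs
      have hs0 : (s - g) 0 = s 0 := by simp [Finsupp.tsub_apply, hg0]
      have hs1 : (s - g) 1 = s 1 - d := by simp [Finsupp.tsub_apply, hg1]
      have hmi : m + 1 - (i + 1) = m - i := by omega
      rw [hmi] at h2
      have hP : P d k m (s - g) :=
        ⟨i, by omega, by rw [hs1]; omega, by rw [hs0]; exact h2,
          by rw [hs0, hs1]; omega⟩
      have hgI : monomial g (1 : K) ∈ I := by
        rw [hI]
        refine Ideal.subset_span (Or.inl ?_)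
        rw [Set.mem_singleton_iff, X_pow_eq_monomial]
      have := Ideal.mul_mem_mul hgI (ih _ hP)
      rw [← pow_succ'] at this
      rw [monomial_mul, one_mul, hsplit] at this
      exact this

lemma span_mul_span_le (d k a b : ℕ) :
    Ideal.span ((fun s => monomial s (1 : K)) '' {s | P d k a s}) *
      Ideal.span ((fun s => monomial s (1 : K)) '' {s | P d k b s}) ≤
    Ideal.span ((fun s => monomial s (1 : K)) '' {s | P d k (a + b) s}) := by
  rw [Ideal.span_mul_span']
  rw [Ideal.span_le]
  rintro p ⟨p1, ⟨s, hs, rfl⟩, p2, ⟨t, ht, rfl⟩, rfl⟩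
  refine Ideal.subset_span ⟨s + t, P_add hs ht, ?_⟩
  dsimp only
  rw [monomial_mul, one_mul]

lemma pow_le_span (d k : ℕ) (hkd : k < d)
    (I : Ideal (MvPolynomial (Fin 2) K))
    (hI : I = Ideal.span ({X 1 ^ d} ∪
        {m : MvPolynomial (Fin 2) K | ∃ j : ℕ, j ≤ k ∧
          m = X 0 ^ (d - k + j) * X 1 ^ (k - j)})) (m : ℕ) :
    I ^ m ≤ Ideal.span ((fun s => monomial s (1 : K)) '' {s | P d k m s}) := by
  have hI1 : I ≤ Ideal.span ((fun s => monomial s (1 : K)) '' {s | P d k 1 s}) := by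
    rw [hI, Ideal.span_le]
    rintro p (hp | ⟨j, hj, rfl⟩)
    · rw [Set.mem_singleton_iff] at hp
      subst hp
      rw [X_pow_eq_monomial]
      exact Ideal.subset_span
        ⟨Finsupp.single 1 d, ⟨1, le_rfl, by simp, by simp, by simp⟩, rfl⟩
    · rw [X_pow_eq_monomial, X_pow_eq_monomial, monomial_mul, one_mul]
      refine Ideal.subset_span ⟨_, ⟨0, by omega, by simp, ?_, ?_⟩, rfl⟩
      · simp [Finsupp.single_apply]
      · simp [Finsupp.single_apply]
        omega
  induction m with
  | zero =>
    rw [pow_zero, Ideal.one_eq_top]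
    have h1 : (1 : MvPolynomial (Fin 2) K) ∈
        Ideal.span ((fun s => monomial s (1 : K)) '' {s | P d k 0 s}) := by
      exact Ideal.subset_span ⟨0, ⟨0, le_rfl, by simp, by simp, by simp⟩, by simp⟩
    rw [(Ideal.eq_top_iff_one _).mpr h1]
  | succ m ih =>
    calc I ^ (m + 1) = I ^ m * I := pow_succ I m
    _ ≤ _ := le_trans (mul_le_mul' ih hI1) (span_mul_span_le d k m 1)

lemma mem_pow_iff (d k : ℕ) (hk : 1 ≤ k) (hkd : k < d)
    (I : Ideal (MvPolynomial (Fin 2) K))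
    (hI : I = Ideal.span ({X 1 ^ d} ∪
        {m : MvPolynomial (Fin 2) K | ∃ j : ℕ, j ≤ k ∧
          m = X 0 ^ (d - k + j) * X 1 ^ (k - j)})) (m : ℕ)
    (f : MvPolynomial (Fin 2) K) :
    f ∈ I ^ m ↔ ∀ s ∈ f.support, P d k m s := by
  have heq : I ^ m = Ideal.span ((fun s => monomial s (1 : K)) '' {s | P d k m s}) := by
    refine le_antisymm (pow_le_span d k hkd I hI m) ?_
    rw [Ideal.span_le]
    rintro p ⟨s, hs, rfl⟩
    exact monomial_mem d k hk hkd I hI m s hs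
  rw [heq, mem_ideal_span_monomial_image]
  constructor
  · intro h s hs
    obtain ⟨t, ht, hts⟩ := h s hs
    exact P_mono ht hts
  · intro h s hs
    exact ⟨s, h s hs, le_rfl⟩

lemma step (d k : ℕ) (hk : 1 ≤ k) (hkd : k < d)
    (I : Ideal (MvPolynomial (Fin 2) K))
    (hI : I = Ideal.span ({X 1 ^ d} ∪
        {m : MvPolynomial (Fin 2) K | ∃ j : ℕ, j ≤ k ∧
          m = X 0 ^ (d - k + j) * X 1 ^ (k - j)}))
    (m : ℕ) (f : MvPolynomial (Fin 2) K)
    (h : monomial (Finsupp.single 1 d) (1 : K) * f ∈ I ^ (m + 1)) : f ∈ I ^ m := by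
  rw [mem_pow_iff d k hk hkd I hI] at h ⊢
  intro s hs
  have hsup : Finsupp.single 1 d + s ∈
      (monomial (Finsupp.single 1 d) (1 : K) * f).support := by
    rw [mem_support_iff, coeff_monomial_mul, one_mul]
    exact mem_support_iff.mp hs
  obtain ⟨i, him, h1, h2, h3⟩ := h _ hsup
  have e1 : (Finsupp.single (1 : Fin 2) d + s) 1 = d + s 1 := by
    simp [Finsupp.add_apply]
  have e0 : (Finsupp.single (1 : Fin 2) d + s) 0 = s 0 := by
    simp [Finsupp.add_apply, Finsupp.single_apply]
  rw [e1] at h1 h3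
  rw [e0] at h2 h3
  have hdm : d * (m + 1) = d * m + d := by ring
  rcases i with _ | i
  · simp only [Nat.sub_zero] at h2
    have hdkm : (d - k) * (m + 1) = (d - k) * m + (d - k) := by ring
    exact ⟨0, Nat.zero_le _, by simp, by simp only [Nat.sub_zero]; omega, by omega⟩
  · have hdi : d * (i + 1) = d * i + d := by ring
    have hmi : m + 1 - (i + 1) = m - i := by omega
    rw [hmi] at h2
    exact ⟨i, by omega, by omega, h2, by omega⟩

lemma iter (d k : ℕ) (hk : 1 ≤ k) (hkd : k < d)
    (I : Ideal (MvPolynomial (Fin 2) K))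
    (hI : I = Ideal.span ({X 1 ^ d} ∪
        {m : MvPolynomial (Fin 2) K | ∃ j : ℕ, j ≤ k ∧
          m = X 0 ^ (d - k + j) * X 1 ^ (k - j)})) :
    ∀ (t m : ℕ) (f : MvPolynomial (Fin 2) K),
      monomial (Finsupp.single 1 (d * t)) (1 : K) * f ∈ I ^ (m + t) → f ∈ I ^ m := by
  intro t
  induction t with
  | zero =>
    intro m f h
    simpa [monomial_zero'] using h
  | succ t ih =>
    intro m f h
    have e : Finsupp.single (1 : Fin 2) (d * (t + 1)) =
        Finsupp.single 1 d + Finsupp.single 1 (d * t) := by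
      rw [← Finsupp.single_add]
      ring_nf
    rw [e, ← one_mul (1 : K), ← monomial_mul, mul_assoc] at h
    exact ih m f (step d k hk hkd I hI (m + t) _ h)

end Stmt15Aux

open Stmt15Aux in
/-- with `d > k ≥ 1`, all powers of
`I_{d,k} = ⟨y^d, x^{d−k}y^k, x^{d−k+1}y^{k−1}, …, x^{d−1}y, x^d⟩ ⊆ K[x,y]`
are Ratliff-Rush. -/
theorem stmt15 {K : Type*} [Field K] (d k : ℕ) (hk : 1 ≤ k) (hkd : k < d)
    (I : Ideal (MvPolynomial (Fin 2) K))
    (hI : I = Ideal.span ({X 1 ^ d} ∪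
        {m : MvPolynomial (Fin 2) K | ∃ j : ℕ, j ≤ k ∧
          m = X 0 ^ (d - k + j) * X 1 ^ (k - j)})) :
    ∀ n : ℕ, 1 ≤ n → RRset (I ^ n) = ((I ^ n : Ideal (MvPolynomial (Fin 2) K)) :
        Set (MvPolynomial (Fin 2) K)) := by
  intro n hn
  ext r
  simp only [RRset, Set.mem_iUnion, SetLike.mem_coe]
  constructor
  · rintro ⟨l, hl, hr⟩
    rw [Submodule.mem_colon] at hr
    have hp : monomial (Finsupp.single 1 (d * (n * l))) (1 : K) ∈ (I ^ n) ^ l := by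
      rw [← pow_mul, mem_pow_iff d k hk hkd I hI]
      intro s hs
      have hss : s = Finsupp.single 1 (d * (n * l)) := by
        classical
        rw [support_monomial, if_neg one_ne_zero] at hs
        exact Finset.mem_singleton.mp hs
      subst hss
      exact ⟨n * l, le_rfl, by simp, by simp, by simp⟩
    have h2 := hr _ hp
    rw [smul_eq_mul, mul_comm r, ← pow_mul] at h2
    have e : n * (l + 1) = n + n * l := by ring
    rw [e] at h2
    exact iter d k hk hkd I hI (n * l) n r h2
  · intro hr
    refine ⟨1, le_rfl, ?_⟩
    rw [Submodule.mem_colon]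
    intro p hp
    rw [smul_eq_mul]
    rw [pow_one] at hp
    have : (I ^ n) ^ (1 + 1) = I ^ n * I ^ n := by
      rw [pow_two]
    rw [this]
    exact Ideal.mul_mem_mul hr hp
end

section
/- Let k be a field, R = k[x,y], and I = ⟨y^8, x^3y^5, x^5y^3, x^8⟩ ⊆ R. Then: (a) I is Ratliff-Rush, i.e., ⋃_{l ≥ 1} (I^{l+1} : I^l) = I; (b) the Ratliff-Rush ideal associated to I^3 is ⋃_{l ≥ 1} ((I^3)^{l+1} : (I^3)^l) = I^3 + ⟨x^{12}y^{12}⟩, and x^{12}y^{12} ∉ I^3, so I^3 is not Ratliff-Rush; (c) I^2 is Ratliff-Rush, and I^n is Ratliff-Rush for every n ≥ 4. -/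
open MvPolynomial

namespace Stmt16Aux

noncomputable def ee (a b : ℕ) : Fin 2 →₀ ℕ := Finsupp.single 0 a + Finsupp.single 1 b
lemma ee_apply0 (a b : ℕ) : ee a b 0 = a := by
  simp [ee, Finsupp.single_eq_of_ne (show (1:Fin 2) ≠ 0 by decide)]
lemma ee_apply1 (a b : ℕ) : ee a b 1 = b := by
  simp [ee, Finsupp.single_eq_of_ne (show (0:Fin 2) ≠ 1 by decide)]
lemma ee_add (a b c d : ℕ) : ee a b + ee c d = ee (a+c) (b+d) := by
  ext i
  fin_cases i <;>
    simp [Finsupp.add_apply, ee_apply0, ee_apply1]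
lemma ee_le_iff {a b : ℕ} {m : Fin 2 →₀ ℕ} : ee a b ≤ m ↔ a ≤ m 0 ∧ b ≤ m 1 := by
  constructor
  · intro h
    exact ⟨(ee_apply0 a b) ▸ h 0, (ee_apply1 a b) ▸ h 1⟩
  · intro ⟨h0, h1⟩ i
    fin_cases i
    · simpa [ee_apply0] using h0
    · simpa [ee_apply1] using h1
def Tset (n : ℕ) : Set ℕ := {x | ∃ a b c : ℕ, a + b + c ≤ n ∧ x = 3*a + 5*b + 8*c}
lemma Tset_le {n u : ℕ} (h : u ∈ Tset n) : u ≤ 8*n := by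
  obtain ⟨a, b, c, h1, rfl⟩ := h; omega
lemma Tset_add {m k u v : ℕ} (hu : u ∈ Tset m) (hv : v ∈ Tset k) :
    u + v ∈ Tset (m + k) := by
  obtain ⟨a, b, c, h1, rfl⟩ := hu
  obtain ⟨a', b', c', h2, rfl⟩ := hv
  exact ⟨a+a', b+b', c+c', by omega, by omega⟩

/-- exponent sets of the powers `I^n`. -/
def Eset (n : ℕ) : Set (Fin 2 →₀ ℕ) :=
  {e | ∃ u v : ℕ, u + v = 8*n ∧ u ∈ Tset n ∧ e = ee u v}

lemma Eset_add {m k : ℕ} {e1 e2 : Fin 2 →₀ ℕ} (h1 : e1 ∈ Eset m) (h2 : e2 ∈ Eset k) :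
    e1 + e2 ∈ Eset (m+k) := by
  obtain ⟨u, v, huv, hu, rfl⟩ := h1
  obtain ⟨u', v', huv', hu', rfl⟩ := h2
  exact ⟨u+u', v+v', by omega, Tset_add hu hu', by rw [ee_add]⟩

lemma Tset_peel {m u : ℕ} (h : u ∈ Tset (m+1)) :
    ∃ u1 g, u1 ∈ Tset m ∧ g ∈ Tset 1 ∧ u1 + g = u := by
  obtain ⟨a, b, c, hcnt, rfl⟩ := h
  by_cases h0 : a + b + c ≤ m
  · exact ⟨_, 0, ⟨a, b, c, h0, rfl⟩, ⟨0,0,0, by omega, by omega⟩, by omega⟩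
  by_cases ha : 1 ≤ a
  · exact ⟨3*(a-1)+5*b+8*c, 3, ⟨a-1, b, c, by omega, rfl⟩, ⟨1,0,0, by omega, by omega⟩, by omega⟩
  by_cases hb : 1 ≤ b
  · exact ⟨3*a+5*(b-1)+8*c, 5, ⟨a, b-1, c, by omega, rfl⟩, ⟨0,1,0, by omega, by omega⟩, by omega⟩
  · exact ⟨3*a+5*b+8*(c-1), 8, ⟨a, b, c-1, by omega, rfl⟩, ⟨0,0,1, by omega, by omega⟩, by omega⟩

lemma Eset_split {m : ℕ} {e : Fin 2 →₀ ℕ} (h : e ∈ Eset (m+1)) :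
    ∃ e1 ∈ Eset m, ∃ e2 ∈ Eset 1, e = e1 + e2 := by
  obtain ⟨u, v, huv, hu, rfl⟩ := h
  obtain ⟨u1, g, hu1, hg, hsum⟩ := Tset_peel hu
  have hu1le := Tset_le hu1
  have hgle := Tset_le hg
  refine ⟨ee u1 (8*m - u1), ⟨u1, 8*m - u1, by omega, hu1, rfl⟩,
    ee g (8 - g), ⟨g, 8 - g, by omega, hg, rfl⟩, ?_⟩
  rw [ee_add]
  congr 1 <;> omega

variable {K : Type*} [Field K]

/-- the monomial ideal with exponents `E` -/
noncomputable def mIdeal (K : Type*) [Field K] (E : Set (Fin 2 →₀ ℕ)) :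
    Ideal (MvPolynomial (Fin 2) K) :=
  Ideal.span ((fun s => monomial s (1 : K)) '' E)

lemma mono_ee (a b : ℕ) :
    (monomial (ee a b) (1 : K)) = X 0 ^ a * X 1 ^ b := by
  rw [X_pow_eq_monomial, X_pow_eq_monomial, monomial_mul, one_mul]; rfl

lemma mem_mIdeal_iff {E : Set (Fin 2 →₀ ℕ)} {f : MvPolynomial (Fin 2) K} :
    f ∈ mIdeal K E ↔ ∀ m ∈ f.support, ∃ s ∈ E, s ≤ m :=
  mem_ideal_span_monomial_image

lemma mIdeal_mul (E1 E2 : Set (Fin 2 →₀ ℕ)) :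
    mIdeal K E1 * mIdeal K E2 =
      Ideal.span ((fun s => monomial s (1 : K)) '' {e | ∃ e1 ∈ E1, ∃ e2 ∈ E2, e = e1 + e2}) := by
  rw [mIdeal, mIdeal, Ideal.span_mul_span']
  congr 1
  ext t
  constructor
  · rintro ⟨_, ⟨e1, he1, rfl⟩, _, ⟨e2, he2, rfl⟩, rfl⟩
    exact ⟨e1 + e2, ⟨e1, he1, e2, he2, rfl⟩, by simp [monomial_mul]⟩
  · rintro ⟨e, ⟨e1, he1, e2, he2, rfl⟩, rfl⟩
    exact ⟨monomial e1 1, ⟨e1, he1, rfl⟩, monomial e2 1, ⟨e2, he2, rfl⟩,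
      by simp [monomial_mul]⟩

lemma power_eq (I : Ideal (MvPolynomial (Fin 2) K))
    (hI : I = Ideal.span {X 1 ^ 8, X 0 ^ 3 * X 1 ^ 5, X 0 ^ 5 * X 1 ^ 3, X 0 ^ 8}) :
    ∀ m : ℕ, I ^ m = mIdeal K (Eset m) := by
  have base : I = mIdeal K (Eset 1) := by
    apply le_antisymm
    · rw [hI, Ideal.span_le]
      intro t ht
      simp only [Set.mem_insert_iff, Set.mem_singleton_iff] at ht
      have mem : ∀ a b : ℕ, (a + b = 8) → a ∈ Tset 1 → X 0 ^ a * X 1 ^ b ∈ mIdeal K (Eset 1) := by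
        intro a b hab ha
        exact Ideal.subset_span ⟨ee a b, ⟨a, b, by omega, ha, rfl⟩, mono_ee a b⟩
      rcases ht with rfl | rfl | rfl | rfl
      · simpa using mem 0 8 (by omega) ⟨0,0,0, by omega, by omega⟩
      · exact mem 3 5 (by omega) ⟨1,0,0, by omega, by omega⟩
      · exact mem 5 3 (by omega) ⟨0,1,0, by omega, by omega⟩
      · simpa using mem 8 0 (by omega) ⟨0,0,1, by omega, by omega⟩
    · rw [mIdeal, Ideal.span_le]
      rintro t ⟨e, ⟨u, v, huv, hu, rfl⟩, rfl⟩
      obtain ⟨a, b, c, hcnt, rfl⟩ := hu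
      have h4 : (a = 0 ∧ b = 0 ∧ c = 0) ∨ (a = 1 ∧ b = 0 ∧ c = 0) ∨
          (a = 0 ∧ b = 1 ∧ c = 0) ∨ (a = 0 ∧ b = 0 ∧ c = 1) := by omega
      rw [hI]
      rcases h4 with ⟨rfl,rfl,rfl⟩|⟨rfl,rfl,rfl⟩|⟨rfl,rfl,rfl⟩|⟨rfl,rfl,rfl⟩
      · obtain rfl : v = 8 := by omega
        refine Ideal.subset_span ?_
        have he : ee (3*0+5*0+8*0) 8 = ee 0 8 := by norm_num
        have h2 : (monomial (ee 0 8)) (1:K) = X 1 ^ 8 := by rw [mono_ee]; ring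
        simp only [he, h2]
        simp
      · obtain rfl : v = 5 := by omega
        refine Ideal.subset_span ?_
        have he : ee (3*1+5*0+8*0) 5 = ee 3 5 := by norm_num
        have h2 : (monomial (ee 3 5)) (1:K) = X 0 ^ 3 * X 1 ^ 5 := by rw [mono_ee]
        simp only [he, h2]
        simp
      · obtain rfl : v = 3 := by omega
        refine Ideal.subset_span ?_
        have he : ee (3*0+5*1+8*0) 3 = ee 5 3 := by norm_num
        have h2 : (monomial (ee 5 3)) (1:K) = X 0 ^ 5 * X 1 ^ 3 := by rw [mono_ee]
        simp only [he, h2]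
        simp
      · obtain rfl : v = 0 := by omega
        refine Ideal.subset_span ?_
        have he : ee (3*0+5*0+8*1) 0 = ee 8 0 := by norm_num
        have h2 : (monomial (ee 8 0)) (1:K) = X 0 ^ 8 := by rw [mono_ee]; ring
        simp only [he, h2]
        simp
  intro m
  induction m with
  | zero =>
    have : Eset 0 = {ee 0 0} := by
      ext e
      constructor
      · rintro ⟨u, v, huv, hu, rfl⟩
        have := Tset_le hu
        have hu0 : u = 0 := by omega
        have hv0 : v = 0 := by omega
        rw [hu0, hv0]; rfl
      · rintro rfl
        exact ⟨0, 0, by omega, ⟨0,0,0, by omega, by omega⟩, rfl⟩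
    rw [pow_zero, this, mIdeal]
    have : (monomial (ee 0 0) (1:K)) = 1 := by
      rw [mono_ee]; simp
    rw [Set.image_singleton, this, Ideal.span_singleton_one, Ideal.one_eq_top]
  | succ m ih =>
    have hset : {e : Fin 2 →₀ ℕ | ∃ e1 ∈ Eset m, ∃ e2 ∈ Eset 1, e = e1 + e2} = Eset (m+1) := by
      ext e
      constructor
      · rintro ⟨e1, he1, e2, he2, rfl⟩
        exact Eset_add he1 he2
      · intro he
        obtain ⟨e1, h1, e2, h2, heq⟩ := Eset_split he
        exact ⟨e1, h1, e2, h2, heq⟩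
    rw [pow_succ, ih, base, mIdeal_mul, hset]
    rfl


lemma mem_colon_span {R : Type*} [CommRing R] {J : Ideal R} {T : Set R} {f : R} :
    f ∈ J.colon (Ideal.span T) ↔ ∀ t ∈ T, f * t ∈ J := by
  rw [Submodule.mem_colon]
  constructor
  · intro h t ht
    simpa [smul_eq_mul, mul_comm] using h t (Ideal.subset_span ht)
  · intro h p hp
    induction hp using Submodule.span_induction with
    | mem x hx => simpa [smul_eq_mul, mul_comm] using h x hx
    | zero => simp
    | add x y _ _ hx hy => simpa [mul_add] using J.add_mem hx hy
    | smul r x _ hx =>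
      rw [smul_comm]
      exact J.smul_mem r hx

lemma mul_monomial_mem_iff {E : Set (Fin 2 →₀ ℕ)} {f : MvPolynomial (Fin 2) K}
    {e : Fin 2 →₀ ℕ} :
    f * monomial e (1:K) ∈ mIdeal K E ↔ ∀ m ∈ f.support, ∃ s ∈ E, s ≤ m + e := by
  rw [mem_mIdeal_iff]
  constructor
  · intro h m hm
    apply h (m + e)
    rw [mem_support_iff, coeff_mul_monomial]
    simpa [mem_support_iff] using hm
  · intro h m' hm'
    rw [mem_support_iff, coeff_mul_monomial'] at hm'
    by_cases hle : e ≤ m'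
    · rw [if_pos hle, mul_one] at hm'
      obtain ⟨s, hs, hsle⟩ := h (m' - e) (mem_support_iff.2 hm')
      refine ⟨s, hs, ?_⟩
      rwa [tsub_add_cancel_of_le hle] at hsle
    · rw [if_neg hle] at hm'
      exact absurd rfl hm'

/-- Characterization of membership in the colon ideal. -/
lemma colon_char {a b : ℕ} {f : MvPolynomial (Fin 2) K} :
    f ∈ (mIdeal K (Eset (a+b))).colon (mIdeal K (Eset a)) ↔
      ∀ m ∈ f.support, ∀ u v : ℕ, u + v = 8*a → u ∈ Tset a →
        ∃ w w' : ℕ, w + w' = 8*(a+b) ∧ w ∈ Tset (a+b) ∧ w ≤ m 0 + u ∧ w' ≤ m 1 + v := by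
  rw [show mIdeal K (Eset a) = Ideal.span ((fun s => monomial s (1:K)) '' Eset a) from rfl,
    mem_colon_span]
  constructor
  · intro h m hm u v huv hu
    have ht : monomial (ee u v) (1:K) ∈ (fun s => monomial s (1:K)) '' Eset a :=
      ⟨ee u v, ⟨u, v, huv, hu, rfl⟩, rfl⟩
    have := (mul_monomial_mem_iff).1 (h _ ht) m hm
    obtain ⟨s, ⟨w, w', hww', hw, rfl⟩, hsle⟩ := this
    rw [ee_le_iff] at hsle
    refine ⟨w, w', hww', hw, ?_, ?_⟩
    · simpa [Finsupp.add_apply, ee_apply0] using hsle.1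
    · simpa [Finsupp.add_apply, ee_apply1] using hsle.2
  · rintro h t ⟨s, ⟨u, v, huv, hu, rfl⟩, rfl⟩
    apply (mul_monomial_mem_iff).2
    intro m hm
    obtain ⟨w, w', hww', hw, h0, h1⟩ := h m hm u v huv hu
    refine ⟨ee w w', ⟨w, w', hww', hw, rfl⟩, ?_⟩
    rw [ee_le_iff]
    constructor
    · simpa [Finsupp.add_apply, ee_apply0] using h0
    · simpa [Finsupp.add_apply, ee_apply1] using h1

lemma support_xy (a b : ℕ) :
    (X 0 ^ a * X 1 ^ b : MvPolynomial (Fin 2) K).support = {ee a b} := by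
  classical
  rw [← mono_ee, support_monomial, if_neg (one_ne_zero' K)]


lemma repReduce : ∀ N a b c : ℕ, 5*a + 3*b ≤ N →
    3*a + 5*b + 8*c = 12 ∨
    ∃ x y z : ℕ, 3*x + 5*y + 8*z = 3*a + 5*b + 8*c ∧ 8*(x+y+z) ≤ 3*a + 5*b + 8*c + 15 := by
  intro N
  induction N with
  | zero =>
    intro a b c h
    right
    exact ⟨a, b, c, rfl, by omega⟩
  | succ N ih =>
    intro a b c h
    by_cases h1 : 1 ≤ a ∧ 1 ≤ b
    · rcases ih (a-1) (b-1) (c+1) (by omega) with h' | ⟨x, y, z, e1, e2⟩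
      · left; omega
      · right; exact ⟨x, y, z, by omega, by omega⟩
    by_cases h2 : 5 ≤ a
    · rcases ih (a-5) (b+3) c (by omega) with h' | ⟨x, y, z, e1, e2⟩
      · left; omega
      · right; exact ⟨x, y, z, by omega, by omega⟩
    by_cases h3 : 4 ≤ a ∧ 1 ≤ c
    · rcases ih (a-4) (b+4) (c-1) (by omega) with h' | ⟨x, y, z, e1, e2⟩
      · left; omega
      · right; exact ⟨x, y, z, by omega, by omega⟩
    by_cases h4 : 6 ≤ b
    · rcases ih (a+2) (b-6) (c+3) (by omega) with h' | ⟨x, y, z, e1, e2⟩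
      · left; omega
      · right; exact ⟨x, y, z, by omega, by omega⟩
    by_cases h5 : a = 4 ∧ b = 0 ∧ c = 0
    · left; omega
    · right; exact ⟨a, b, c, rfl, by omega⟩

lemma core {n l p q : ℕ} (hn : 1 ≤ n) (hl : 1 ≤ l)
    (H : ∀ u ∈ Tset (n*l), ∃ w ∈ Tset (n*l+n), w ≤ p + u ∧ u + 8*n ≤ w + q) :
    (∃ v v' : ℕ, v + v' = 8*n ∧ v ∈ Tset n ∧ v ≤ p ∧ v' ≤ q) ∨
      (n = 3 ∧ 12 ≤ p ∧ 12 ≤ q) := by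
  by_cases hp : 8*n ≤ p
  · exact Or.inl ⟨8*n, 0, by omega, ⟨0,0,n, by omega, by omega⟩, by omega, by omega⟩
  by_cases hq : 8*n ≤ q
  · exact Or.inl ⟨0, 8*n, by omega, ⟨0,0,0, by omega, by omega⟩, by omega, by omega⟩
  obtain ⟨w, hwT, hw1, hw2⟩ := H 0 ⟨0,0,0, by omega, by omega⟩
  obtain ⟨aw, bw, cw, hwcnt, hweq⟩ := hwT
  obtain ⟨w', hw'T, hw'1, hw'2⟩ := H (8*(n*l)) ⟨0,0,n*l, by omega, by omega⟩
  obtain ⟨a', b', c', h'cnt, h'eq⟩ := hw'T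
  obtain ⟨d, hdq, hdlb, hdg1, hdg2, hdg3, hdg4⟩ :
      ∃ d, d ≤ q ∧ 8*n ≤ d + p ∧ d ≠ 1 ∧ d ≠ 2 ∧ d ≠ 4 ∧ d ≠ 7 := by
    refine ⟨5*a' + 3*b' + 8*(n*l+n - (a'+b'+c')), by omega, by omega, by omega, by omega,
      by omega, by omega⟩
  clear hw'1 hw'2 h'cnt h'eq
  by_cases hw8 : w + 8 ≤ 8*n
  · by_cases hw12 : w = 12
    · rcases (by omega : n = 3 ∨ 4 ≤ n) with h3 | h4
      · right; refine ⟨h3, by omega, by omega⟩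
      · left
        exact ⟨12, 8*n-12, by omega, ⟨4,0,0, by omega, by omega⟩, by omega, by omega⟩
    · rcases repReduce (5*aw+3*bw) aw bw cw le_rfl with h' | ⟨x, y, z, e1, e2⟩
      · exact absurd (by omega) hw12
      · left
        exact ⟨w, 8*n - w, by omega, ⟨x, y, z, by omega, by omega⟩, by omega, by omega⟩
  · have hw_gaps : w ≠ 1 ∧ w ≠ 2 ∧ w ≠ 4 ∧ w ≠ 7 := by omega
    clear hwcnt hweq
    obtain ⟨r, hr, hr1, hr7⟩ : ∃ r, w + r = 8*n ∧ 1 ≤ r ∧ r ≤ 7 :=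
      ⟨8*n - w, by omega, by omega, by omega⟩
    interval_cases r
    · by_cases hq3 : 3 ≤ q
      · exact Or.inl ⟨8*n-3, 3, by omega, ⟨0,1,n-1, by omega, by omega⟩, by omega, by omega⟩
      · omega
    · by_cases hq3 : 3 ≤ q
      · exact Or.inl ⟨8*n-3, 3, by omega, ⟨0,1,n-1, by omega, by omega⟩, by omega, by omega⟩
      · omega
    · exact Or.inl ⟨8*n-3, 3, by omega, ⟨0,1,n-1, by omega, by omega⟩, by omega, by omega⟩
    · have hn2 : 2 ≤ n := by omega
      by_cases hq5 : 5 ≤ q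
      · exact Or.inl ⟨8*n-5, 5, by omega, ⟨1,0,n-1, by omega, by omega⟩, by omega, by omega⟩
      by_cases hp3 : 8*n-3 ≤ p
      · exact Or.inl ⟨8*n-3, 3, by omega, ⟨0,1,n-1, by omega, by omega⟩, by omega, by omega⟩
      · omega
    · exact Or.inl ⟨8*n-5, 5, by omega, ⟨1,0,n-1, by omega, by omega⟩, by omega, by omega⟩
    · have hn2 : 2 ≤ n := by omega
      exact Or.inl ⟨8*n-6, 6, by omega, ⟨0,2,n-2, by omega, by omega⟩, by omega, by omega⟩
    · have hn2 : 2 ≤ n := by omega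
      by_cases hq8 : 8 ≤ q
      · exact Or.inl ⟨8*n-8, 8, by omega, ⟨0,0,n-1, by omega, by omega⟩, by omega, by omega⟩
      by_cases hp6 : 8*n-6 ≤ p
      · exact Or.inl ⟨8*n-6, 6, by omega, ⟨0,2,n-2, by omega, by omega⟩, by omega, by omega⟩
      · omega

lemma T12 {u : ℕ} (hu : u ∈ Tset 3) : u + 12 ∈ Tset (3+3) := by
  obtain ⟨a, b, c, hcnt, rfl⟩ := hu
  by_cases h0 : a + b + c ≤ 2
  · exact ⟨a+4, b, c, by omega, by omega⟩
  by_cases ha : 1 ≤ a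
  · exact ⟨a-1, b+3, c, by omega, by omega⟩
  by_cases hb : 1 ≤ b
  · exact ⟨a+3, b-1, c+1, by omega, by omega⟩
  · exact ⟨a, b+4, c-1, by omega, by omega⟩

lemma self_subset_RR {R : Type*} [CommRing R] (J : Ideal R) :
    (J : Set R) ⊆ RRset J := by
  intro f hf
  simp only [RRset, Set.mem_iUnion]
  refine ⟨1, le_rfl, ?_⟩
  rw [SetLike.mem_coe, Submodule.mem_colon]
  intro p hp
  rw [pow_one] at hp
  rw [smul_eq_mul, show (1:ℕ)+1 = 2 from rfl, pow_two]
  exact Ideal.mul_mem_mul hf hp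

theorem master {K : Type*} [Field K] (I : Ideal (MvPolynomial (Fin 2) K))
    (hI : I = Ideal.span {X 1 ^ 8, X 0 ^ 3 * X 1 ^ 5, X 0 ^ 5 * X 1 ^ 3, X 0 ^ 8})
    (n : ℕ) (hn : 1 ≤ n) (f : MvPolynomial (Fin 2) K) (hf : f ∈ RRset (I^n)) :
    ∀ m ∈ f.support, (∃ s ∈ Eset n, s ≤ m) ∨ (n = 3 ∧ ee 12 12 ≤ m) := by
  have hP := power_eq I hI
  simp only [RRset, Set.mem_iUnion] at hf
  obtain ⟨l, hl, hf⟩ := hf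
  rw [SetLike.mem_coe] at hf
  have e1 : (I^n)^l = I^(n*l) := (pow_mul I n l).symm
  have e2 : (I^n)^(l+1) = I^(n*l+n) := by
    rw [← pow_mul, Nat.mul_succ]
  rw [e2, e1, hP, hP, colon_char] at hf
  intro m hm
  have H : ∀ u ∈ Tset (n*l), ∃ w ∈ Tset (n*l+n), w ≤ m 0 + u ∧ u + 8*n ≤ w + m 1 := by
    intro u hu
    have hule := Tset_le hu
    obtain ⟨w, w', hww', hwT, hw0, hw1⟩ := hf m hm u (8*(n*l) - u) (by omega) hu
    have hwle := Tset_le hwT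
    exact ⟨w, hwT, hw0, by omega⟩
  rcases core hn hl H with ⟨v, v', hvv', hv, h0, h1⟩ | ⟨h3, h12a, h12b⟩
  · exact Or.inl ⟨ee v v', ⟨v, v', hvv', hv, rfl⟩, ee_le_iff.2 ⟨h0, h1⟩⟩
  · exact Or.inr ⟨h3, ee_le_iff.2 ⟨h12a, h12b⟩⟩

end Stmt16Aux

/-- for `I = ⟨y^8, x^3y^5, x^5y^3, x^8⟩ ⊆ K[x,y]`:
(a) `I` is Ratliff-Rush; (b) the Ratliff-Rush ideal associated to `I^3` is
`I^3 + ⟨x^{12}y^{12}⟩` and `x^{12}y^{12} ∉ I^3`, so `I^3` is not Ratliff-Rush;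
(c) `I^2` is Ratliff-Rush and `I^n` is Ratliff-Rush for all `n ≥ 4`. -/
theorem stmt16 {K : Type*} [Field K]
    (I : Ideal (MvPolynomial (Fin 2) K))
    (hI : I = Ideal.span {X 1 ^ 8, X 0 ^ 3 * X 1 ^ 5, X 0 ^ 5 * X 1 ^ 3, X 0 ^ 8}) :
    RRset I = (I : Set (MvPolynomial (Fin 2) K)) ∧
    RRset (I ^ 3) =
      ((I ^ 3 + Ideal.span {X 0 ^ 12 * X 1 ^ 12} : Ideal (MvPolynomial (Fin 2) K)) :
        Set (MvPolynomial (Fin 2) K)) ∧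
    (X 0 ^ 12 * X 1 ^ 12 : MvPolynomial (Fin 2) K) ∉ I ^ 3 ∧
    RRset (I ^ 2) = ((I ^ 2 : Ideal (MvPolynomial (Fin 2) K)) :
        Set (MvPolynomial (Fin 2) K)) ∧
    ∀ n : ℕ, 4 ≤ n → RRset (I ^ n) = ((I ^ n : Ideal (MvPolynomial (Fin 2) K)) :
        Set (MvPolynomial (Fin 2) K)) := by
  classical
  have hP := Stmt16Aux.power_eq I hI
  open Stmt16Aux in
  refine ⟨?_, ?_, ?_, ?_, ?_⟩
  · -- (a)
    apply Set.Subset.antisymm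
    · intro f hf
      have hf1 : f ∈ RRset (I^1) := by rwa [pow_one]
      rw [SetLike.mem_coe, show I = I^1 from (pow_one I).symm, hP 1, mem_mIdeal_iff]
      intro m hm
      rcases master I hI 1 le_rfl f hf1 m hm with h | ⟨h3, _⟩
      · exact h
      · exact absurd h3 (by norm_num)
    · exact self_subset_RR I
  · -- (b)
    have hJ : (I^3 + Ideal.span {X 0^12 * X 1^12} : Ideal (MvPolynomial (Fin 2) K)) =
        mIdeal K (Eset 3 ∪ {ee 12 12}) := by
      rw [hP 3, mIdeal, mIdeal, Set.image_union, Ideal.span_union, Set.image_singleton,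
        mono_ee, Submodule.add_eq_sup]
    apply Set.Subset.antisymm
    · intro f hf
      rw [SetLike.mem_coe, hJ, mem_mIdeal_iff]
      intro m hm
      rcases master I hI 3 (by norm_num) f hf m hm with ⟨s, hs, hle⟩ | ⟨_, h12⟩
      · exact ⟨s, Set.mem_union_left _ hs, hle⟩
      · exact ⟨ee 12 12, Set.mem_union_right _ rfl, h12⟩
    · intro f hf
      simp only [RRset, Set.mem_iUnion]
      refine ⟨1, le_rfl, ?_⟩
      rw [SetLike.mem_coe]
      have hcol : (I^3 + Ideal.span {X 0^12 * X 1^12} : Ideal (MvPolynomial (Fin 2) K)) ≤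
          ((I^3)^(1+1)).colon (((I^3)^1 : Ideal (MvPolynomial (Fin 2) K)) : Set (MvPolynomial (Fin 2) K)) := by
        apply sup_le
        · intro g hg
          rw [Submodule.mem_colon]
          intro p hp
          rw [pow_one] at hp
          rw [smul_eq_mul, show (1:ℕ)+1 = 2 from rfl, pow_two]
          exact Ideal.mul_mem_mul hg hp
        · rw [Ideal.span_le]
          intro t ht
          rw [Set.mem_singleton_iff] at ht; subst ht
          rw [SetLike.mem_coe]
          have e2 : (I^3)^(1+1) = I^(3+3) := by
            rw [← pow_mul]
          have e1 : (I^3)^1 = I^3 := pow_one _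
          rw [e2, e1, hP, hP, colon_char]
          intro m hm u v huv hu
          rw [support_xy, Finset.mem_singleton] at hm
          subst hm
          rw [ee_apply0, ee_apply1]
          exact ⟨u+12, v+12, by omega, T12 hu, by omega, by omega⟩
      exact hcol hf
  · -- x^12 y^12 not in I^3
    intro h
    rw [hP 3, mem_mIdeal_iff] at h
    obtain ⟨s, ⟨u, v, huv, hu, rfl⟩, hle⟩ :=
      h (ee 12 12) (by rw [support_xy]; exact Finset.mem_singleton_self _)
    rw [ee_le_iff, ee_apply0, ee_apply1] at hle
    obtain ⟨a, b, c, hcnt, rfl⟩ := hu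
    have hc : c ≤ 3 := by omega
    have hb : b ≤ 4 := by omega
    interval_cases c <;> interval_cases b <;> omega
  · -- (c) n = 2
    apply Set.Subset.antisymm
    · intro f hf
      rw [SetLike.mem_coe, hP 2, mem_mIdeal_iff]
      intro m hm
      rcases master I hI 2 (by norm_num) f hf m hm with h | ⟨h3, _⟩
      · exact h
      · exact absurd h3 (by norm_num)
    · exact self_subset_RR (I^2)
  · -- (c) n ≥ 4
    intro n hn
    apply Set.Subset.antisymm
    · intro f hf
      rw [SetLike.mem_coe, hP n, mem_mIdeal_iff]
      intro m hm
      rcases master I hI n (by omega) f hf m hm with h | ⟨h3, _⟩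
      · exact h
      · omega
    · exact self_subset_RR (I^n)
end

section
/- Let k be a field, R = k[x,y], and for an integer k₀ ≥ 1 let I_{k₀} = ⟨y^{6k₀+1}⟩ + ⟨x^{2(k₀+i)+1}y^{4k₀−2i} : 0 ≤ i ≤ k₀−1⟩ + ⟨x^{4k₀+i+1}y^{2k₀−i} : 0 ≤ i ≤ 2k₀⟩ ⊆ R. Then for every integer n ≥ 1 the power I_{k₀}^n is Ratliff-Rush, i.e., ⋃_{l ≥ 1} ((I_{k₀}^n)^{l+1} : (I_{k₀}^n)^l) = I_{k₀}^n. -/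
open MvPolynomial

namespace Stmt17Aux

/-- `P a n j` says that `x^j y^(n*(6a+1)-j)` is one of the canonical monomial
generators of `I_a^n`. -/
def P (a n j : ℕ) : Prop :=
  j = 0 ∨ (2*a+1 ≤ j ∧ j ≤ 4*a ∧ j % 2 = 1) ∨ (4*a+1 ≤ j ∧ j ≤ n*(6*a+1))

lemma P_le {a n j : ℕ} (hn : 1 ≤ n) (h : P a n j) : j ≤ n*(6*a+1) := by
  have h1 : 6*a+1 ≤ n*(6*a+1) := Nat.le_mul_of_pos_left _ hn
  unfold P at h; omega

lemma P_of_le {a n m j : ℕ} (h : P a m j) (hb : j ≤ n*(6*a+1)) : P a n j := by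
  unfold P at h ⊢; omega

lemma P_add {a n m s t : ℕ} (hn : 1 ≤ n) (hm : 1 ≤ m)
    (hs : P a n s) (ht : P a m t) : P a (n+m) (s+t) := by
  have h1 : s ≤ n*(6*a+1) := P_le hn hs
  have h2 : t ≤ m*(6*a+1) := P_le hm ht
  have h3 : (n+m)*(6*a+1) = n*(6*a+1) + m*(6*a+1) := by ring
  unfold P at hs ht ⊢; omega

/-- Key combinatorial lemma: every generator exponent of level `n+1` splits as a
sum of a level-`1` and a level-`n` generator exponent. -/
lemma P_repr {a n j : ℕ} (ha : 1 ≤ a) (hn : 1 ≤ n) (h : P a (n+1) j) :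
    ∃ s t, P a 1 s ∧ P a n t ∧ j = s + t := by
  have hd : (n+1)*(6*a+1) = n*(6*a+1) + (6*a+1) := by ring
  have hd1 : 6*a+1 ≤ n*(6*a+1) := Nat.le_mul_of_pos_left _ hn
  by_cases hj : j ≤ n*(6*a+1)
  · exact ⟨0, j, Or.inl rfl, P_of_le h hj, (Nat.zero_add j).symm⟩
  · have hj2 : j ≤ (n+1)*(6*a+1) := P_le (by omega) h
    by_cases h8 : 8*a+2 ≤ j
    · refine ⟨max (4*a+1) (j - n*(6*a+1)), j - max (4*a+1) (j - n*(6*a+1)), ?_, ?_, ?_⟩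
      · unfold P; omega
      · unfold P; omega
      · omega
    · match n, hn with
      | 1, _ =>
        refine ⟨if (j - (4*a+1)) % 2 = 1 then j - (4*a+1) else j - (4*a+2),
          j - (if (j - (4*a+1)) % 2 = 1 then j - (4*a+1) else j - (4*a+2)), ?_, ?_, ?_⟩
        · unfold P; split <;> omega
        · unfold P; split <;> omega
        · split <;> omega
      | (m+2), _ =>
        exfalso
        have : 2*(6*a+1) ≤ (m+2)*(6*a+1) := Nat.mul_le_mul_right _ (by omega)
        omega

/-- Exponent vector of the generator `x^j y^(n*(6a+1)-j)`. -/
noncomputable def E (a n j : ℕ) : Fin 2 →₀ ℕ :=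
  Finsupp.single 0 j + Finsupp.single 1 (n*(6*a+1) - j)

def Gset (a n : ℕ) : Set (Fin 2 →₀ ℕ) := {v | ∃ j, P a n j ∧ v = E a n j}

lemma E_apply_zero (a n j : ℕ) : E a n j 0 = j := by
  simp [E, Finsupp.single_apply]

lemma E_apply_one (a n j : ℕ) : E a n j 1 = n*(6*a+1) - j := by
  simp [E, Finsupp.single_apply]

lemma E_add {a n m j₁ j₂ : ℕ} (h1 : j₁ ≤ n*(6*a+1)) (h2 : j₂ ≤ m*(6*a+1)) :
    E a n j₁ + E a m j₂ = E a (n+m) (j₁+j₂) := by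
  have h3 : (n+m)*(6*a+1) = n*(6*a+1) + m*(6*a+1) := by ring
  unfold E
  rw [add_add_add_comm, ← Finsupp.single_add, ← Finsupp.single_add]
  congr 1
  exact congrArg _ (by omega)

lemma X_mul_eq {K : Type*} [CommSemiring K] (a n j q : ℕ) (h : q = n*(6*a+1) - j) :
    (X 0 : MvPolynomial (Fin 2) K) ^ j * X 1 ^ q = monomial (E a n j) 1 := by
  subst h
  rw [X_pow_eq_monomial, X_pow_eq_monomial, monomial_mul, one_mul]
  rfl

lemma span_pow {K : Type*} [CommSemiring K] {a : ℕ} (ha : 1 ≤ a) (n : ℕ) (hn : 1 ≤ n) :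
    (Ideal.span ((fun s => monomial s (1:K)) '' Gset a 1)) ^ n
      = Ideal.span ((fun s => monomial s (1:K)) '' Gset a n) := by
  induction n with
  | zero => omega
  | succ n ih =>
    by_cases h0 : n = 0
    · subst h0; rw [pow_one]
    · have ih := ih (by omega)
      rw [pow_succ, ih, Ideal.span_mul_span]
      apply le_antisymm
      · rw [Ideal.span_le]
        rintro x hx
        simp only [Set.mem_mul, Set.mem_iUnion, Set.mem_singleton_iff] at hx
        obtain ⟨s, hsm, t, htm, rfl⟩ := hx
        obtain ⟨v₁, ⟨j₁, hj₁, rfl⟩, rfl⟩ := hsm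
        obtain ⟨v₂, ⟨j₂, hj₂, rfl⟩, rfl⟩ := htm
        apply Ideal.subset_span
        refine ⟨E a (n+1) (j₁+j₂), ⟨j₁+j₂, P_add (by omega) le_rfl hj₁ hj₂, rfl⟩, ?_⟩
        rw [monomial_mul, one_mul, E_add (P_le (by omega) hj₁) (P_le le_rfl hj₂)]
      · rw [Ideal.span_le]
        rintro x ⟨v, ⟨j, hPj, rfl⟩, rfl⟩
        obtain ⟨s, t, hs, ht, rfl⟩ := P_repr ha (by omega : 1 ≤ n) hPj
        apply Ideal.subset_span
        simp only [Set.mem_iUnion, Set.mem_singleton_iff]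
        refine ⟨monomial (E a n t) 1, ⟨E a n t, ⟨t, ht, rfl⟩, rfl⟩,
          monomial (E a 1 s) 1, ⟨E a 1 s, ⟨s, hs, rfl⟩, rfl⟩, ?_⟩
        beta_reduce
        rw [monomial_mul, one_mul, E_add (P_le (by omega) ht) (P_le le_rfl hs), add_comm t s]

/-- The generating set in the statement coincides with the canonical monomial
generating set. -/
lemma gens_eq {K : Type*} [CommSemiring K] {a : ℕ} (ha : 1 ≤ a) :
    ({X 1 ^ (6 * a + 1)} ∪
        {m : MvPolynomial (Fin 2) K | ∃ i : ℕ, i ≤ a - 1 ∧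
          m = X 0 ^ (2 * (a + i) + 1) * X 1 ^ (4 * a - 2 * i)} ∪
        {m : MvPolynomial (Fin 2) K | ∃ i : ℕ, i ≤ 2 * a ∧
          m = X 0 ^ (4 * a + i + 1) * X 1 ^ (2 * a - i)})
      = (fun s => monomial s (1:K)) '' Gset a 1 := by
  have hone : ∀ j q : ℕ, q = 1*(6*a+1) - j →
      (X 0 : MvPolynomial (Fin 2) K) ^ j * X 1 ^ q = monomial (E a 1 j) 1 :=
    fun j q h => X_mul_eq a 1 j q h
  have hy : (X 1 : MvPolynomial (Fin 2) K) ^ (6*a+1) = monomial (E a 1 0) 1 := by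
    rw [← one_mul ((X 1 : MvPolynomial (Fin 2) K) ^ (6*a+1)), ← pow_zero (X 0 : MvPolynomial (Fin 2) K)]
    exact hone 0 (6*a+1) (by omega)
  ext f
  constructor
  · rintro ((rfl | ⟨i, hi, rfl⟩) | ⟨i, hi, rfl⟩)
    · exact ⟨E a 1 0, ⟨0, Or.inl rfl, rfl⟩, hy.symm⟩
    · refine ⟨E a 1 (2*(a+i)+1), ⟨2*(a+i)+1, Or.inr (Or.inl ⟨by omega, by omega, by omega⟩), rfl⟩,
        (hone (2*(a+i)+1) (4*a - 2*i) (by omega)).symm⟩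
    · refine ⟨E a 1 (4*a+i+1), ⟨4*a+i+1, Or.inr (Or.inr ⟨by omega, by omega⟩), rfl⟩,
        (hone (4*a+i+1) (2*a - i) (by omega)).symm⟩
  · rintro ⟨v, ⟨j, hPj, rfl⟩, rfl⟩
    rcases hPj with rfl | ⟨hj1, hj2, hj3⟩ | ⟨hj1, hj2⟩
    · exact Or.inl (Or.inl hy.symm)
    · obtain ⟨i, hji, hile⟩ : ∃ i : ℕ, j = 2*(a+i)+1 ∧ i ≤ a - 1 :=
        ⟨(j - (2*a+1))/2, by omega, by omega⟩
      refine Or.inl (Or.inr ⟨i, hile, ?_⟩)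
      rw [hji, hone (2*(a+i)+1) (4*a - 2*i) (by omega)]
    · obtain ⟨i, hji, hile⟩ : ∃ i : ℕ, j = 4*a+i+1 ∧ i ≤ 2*a :=
        ⟨j - (4*a+1), by omega, by omega⟩
      refine Or.inr ⟨i, hile, ?_⟩
      rw [hji, hone (4*a+i+1) (2*a - i) (by omega)]

end Stmt17Aux

open Stmt17Aux in
/-- for `k₀ ≥ 1`, all powers of
`I_{k₀} = ⟨y^{6k₀+1}⟩ + ⟨x^{2(k₀+i)+1} y^{4k₀−2i} : 0 ≤ i ≤ k₀−1⟩
        + ⟨x^{4k₀+i+1} y^{2k₀−i} : 0 ≤ i ≤ 2k₀⟩ ⊆ K[x,y]`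
are Ratliff-Rush. -/
theorem stmt17 {K : Type*} [Field K] (k₀ : ℕ) (hk₀ : 1 ≤ k₀)
    (I : Ideal (MvPolynomial (Fin 2) K))
    (hI : I = Ideal.span ({X 1 ^ (6 * k₀ + 1)} ∪
        {m : MvPolynomial (Fin 2) K | ∃ i : ℕ, i ≤ k₀ - 1 ∧
          m = X 0 ^ (2 * (k₀ + i) + 1) * X 1 ^ (4 * k₀ - 2 * i)} ∪
        {m : MvPolynomial (Fin 2) K | ∃ i : ℕ, i ≤ 2 * k₀ ∧
          m = X 0 ^ (4 * k₀ + i + 1) * X 1 ^ (2 * k₀ - i)})) :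
    ∀ n : ℕ, 1 ≤ n → RRset (I ^ n) = ((I ^ n : Ideal (MvPolynomial (Fin 2) K)) :
        Set (MvPolynomial (Fin 2) K)) := by
  have hG : I = Ideal.span ((fun s => monomial s (1:K)) '' Gset k₀ 1) := by
    rw [hI, gens_eq hk₀]
  intro n hn
  apply Set.Subset.antisymm
  · intro f hf
    simp only [RRset, Set.mem_iUnion, SetLike.mem_coe] at hf
    obtain ⟨l, hl, hf⟩ := hf
    -- multiply by `(y^(6k₀+1))^(n*l) ∈ (I^n)^l`
    have hyI : (monomial (Finsupp.single 1 ((n*l)*(6*k₀+1))) (1:K)) ∈ (I^n)^l := by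
      rw [hG, ← pow_mul, span_pow hk₀ (n*l) (Nat.one_le_iff_ne_zero.mpr (by positivity))]
      apply Ideal.subset_span
      refine ⟨E k₀ (n*l) 0, ⟨0, Or.inl rfl, rfl⟩, ?_⟩
      congr 1
      simp [E]
    have hmem : f * monomial (Finsupp.single 1 ((n*l)*(6*k₀+1))) (1:K)
        ∈ Ideal.span ((fun s => monomial s (1:K)) '' Gset k₀ (n*(l+1))) := by
      have h := Submodule.mem_colon.mp hf _ hyI
      rw [smul_eq_mul] at h
      rwa [hG, ← pow_mul, span_pow hk₀ (n*(l+1)) (Nat.one_le_iff_ne_zero.mpr (by positivity))] at h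
    rw [SetLike.mem_coe, hG, ← pow_mul, span_pow hk₀ n hn] at *
    rw [mem_ideal_span_monomial_image] at hmem ⊢
    intro m hm
    have hms : m + Finsupp.single 1 ((n*l)*(6*k₀+1))
        ∈ (f * monomial (Finsupp.single 1 ((n*l)*(6*k₀+1))) (1:K)).support := by
      rw [mem_support_iff, coeff_mul_monomial, mul_one]
      exact mem_support_iff.mp hm
    obtain ⟨v, ⟨j, hPj, rfl⟩, hle⟩ := hmem _ hms
    have h0 : j ≤ m 0 := by
      have := Finsupp.le_def.mp hle 0
      simpa [E_apply_zero, Finsupp.add_apply, Finsupp.single_apply] using this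
    have h1 : (n*(l+1))*(6*k₀+1) - j ≤ m 1 + (n*l)*(6*k₀+1) := by
      have := Finsupp.le_def.mp hle 1
      simpa [E_apply_one, Finsupp.add_apply, Finsupp.single_apply] using this
    have hD : (n*(l+1))*(6*k₀+1) = n*(6*k₀+1) + (n*l)*(6*k₀+1) := by ring
    by_cases hjn : j ≤ n*(6*k₀+1)
    · refine ⟨E k₀ n j, ⟨j, P_of_le hPj hjn, rfl⟩, ?_⟩
      rw [Finsupp.le_def]
      intro i
      fin_cases i
      · show E k₀ n j 0 ≤ m 0
        rw [E_apply_zero]; exact h0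
      · show E k₀ n j 1 ≤ m 1
        rw [E_apply_one]; omega
    · have hnd : 4*k₀+1 ≤ n*(6*k₀+1) := by
        have : 6*k₀+1 ≤ n*(6*k₀+1) := Nat.le_mul_of_pos_left _ hn
        omega
      refine ⟨E k₀ n (n*(6*k₀+1)), ⟨n*(6*k₀+1), Or.inr (Or.inr ⟨hnd, le_rfl⟩), rfl⟩, ?_⟩
      rw [Finsupp.le_def]
      intro i
      fin_cases i
      · show E k₀ n (n*(6*k₀+1)) 0 ≤ m 0
        rw [E_apply_zero]; omega
      · show E k₀ n (n*(6*k₀+1)) 1 ≤ m 1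
        rw [E_apply_one]; omega
  · intro f hf
    rw [SetLike.mem_coe] at hf
    simp only [RRset, Set.mem_iUnion, SetLike.mem_coe]
    refine ⟨1, le_rfl, Submodule.mem_colon.mpr fun p hp => ?_⟩
    rw [SetLike.mem_coe, pow_one] at hp
    rw [smul_eq_mul, pow_succ, pow_one]
    exact Ideal.mul_mem_mul hf hp
end

section
/- Let k₀ ≥ 1 be an integer and let S be the numerical semigroup (additive submonoid of ℕ) generated by the set A = {2(k₀+i)+1 : 0 ≤ i ≤ k₀−1} ∪ {4k₀+i+1 : 0 ≤ i ≤ 2k₀}. Then: (a) S = {0} ∪ A ∪ {n ∈ ℕ : n ≥ 6k₀+1}; and (b) for every integer l ≥ 1, every s ∈ S with s ≤ l·(6k₀+1) can be written as an ℕ-linear combination of the generators in A whose coefficients sum to at most l. -/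
/-!
Every generator is at least `2k₀+1`, so a sum of two nonzero elements of `S` is at least
`4k₀+2`; the generators contain the whole interval `[4k₀+1, 6k₀+1]`, so such a sum is either a
generator or at least `6k₀+1`. This gives `S ⊆ {0} ∪ A ∪ [6k₀+1, ∞)`. Conversely, with
`b = 6k₀+1` the largest generator, every `s ∈ (b, 2b)` is a sum of two generators
(`2k₀+1` plus an element of `[4k₀+1, 6k₀+1]`, or two halves of `s`), and subtracting `b`
repeatedly from `s ≤ l·b` writes `s` with at most `l` generators.
-/

open Finset

section IsSumOfAtMost

variable {ι M : Type*} [Fintype ι] [AddCommMonoid M] {g : ι → M} {m n : ℕ} {s t : M}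

def IsSumOfAtMost (g : ι → M) (m : ℕ) (s : M) : Prop :=
  ∃ c : ι → ℕ, s = ∑ i, c i • g i ∧ ∑ i, c i ≤ m

theorem isSumOfAtMost_zero (g : ι → M) (m : ℕ) : IsSumOfAtMost g m 0 :=
  ⟨0, by simp, by simp⟩

theorem IsSumOfAtMost.mono (h : IsSumOfAtMost g m s) (hmn : m ≤ n) : IsSumOfAtMost g n s := by
  obtain ⟨c, hs, hc⟩ := h
  exact ⟨c, hs, hc.trans hmn⟩

theorem IsSumOfAtMost.add (hs : IsSumOfAtMost g m s) (ht : IsSumOfAtMost g n t) :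
    IsSumOfAtMost g (m + n) (s + t) := by
  obtain ⟨c, rfl, hc⟩ := hs
  obtain ⟨d, rfl, hd⟩ := ht
  refine ⟨c + d, ?_, ?_⟩
  · simp only [Pi.add_apply, add_smul, sum_add_distrib]
  · simpa only [Pi.add_apply, sum_add_distrib] using Nat.add_le_add hc hd

theorem isSumOfAtMost_one_of_mem_range (hs : s ∈ Set.range g) : IsSumOfAtMost g 1 s := by
  classical
  obtain ⟨i, rfl⟩ := hs
  exact ⟨Pi.single i 1, by simp [Pi.single_apply], by simp⟩

theorem IsSumOfAtMost.mem_closure (h : IsSumOfAtMost g m s) :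
    s ∈ AddSubmonoid.closure (Set.range g) := by
  obtain ⟨c, rfl, -⟩ := h
  exact AddSubmonoid.sum_mem _ fun i _ =>
    AddSubmonoid.nsmul_mem _ (AddSubmonoid.subset_closure (Set.mem_range_self i)) _

end IsSumOfAtMost

theorem closure_subset_of_Ico_subset {A : Set ℕ} {a b : ℕ} (hA : A ⊆ Set.Ici a)
    (hgap : Set.Ico (2 * a) b ⊆ A) :
    (AddSubmonoid.closure A : Set ℕ) ⊆ {0} ∪ A ∪ Set.Ici b := by
  intro s hs
  induction hs using AddSubmonoid.closure_induction with
  | mem x hx => exact .inl (.inr hx)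
  | zero => exact .inl (.inl rfl)
  | add x y _ _ hx hy =>
    rcases hx with (rfl | hxA) | hxb
    · simpa using hy
    · rcases hy with (rfl | hyA) | hyb
      · simpa using Or.inl (Or.inr hxA)
      · have : 2 * a ≤ x + y := by
          have hx := Set.mem_Ici.1 (hA hxA)
          have hy := Set.mem_Ici.1 (hA hyA)
          omega
        by_cases hb : b ≤ x + y
        · exact .inr hb
        · exact .inl (.inr (hgap ⟨this, by omega⟩))
      · exact .inr (Set.mem_Ici.2 (le_add_left hyb))
    · exact .inr (Set.mem_Ici.2 (le_add_right hxb))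

theorem isSumOfAtMost_of_le_mul {ι : Type*} [Fintype ι] {g : ι → ℕ} {b : ℕ}
    (hb : b ∈ Set.range g)
    (hpair : ∀ s, b < s → s < 2 * b → ∃ x ∈ Set.range g, ∃ y ∈ Set.range g, s = x + y) :
    ∀ l s, b ≤ s → s ≤ l * b → IsSumOfAtMost g l s := by
  intro l
  induction l with
  | zero =>
    intro s _ hs
    obtain rfl : s = 0 := by simpa using hs
    exact isSumOfAtMost_zero g 0
  | succ l ih =>
    intro s hbs hs
    rw [Nat.succ_mul] at hs
    rcases hbs.eq_or_lt with rfl | hbs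
    · exact (isSumOfAtMost_one_of_mem_range hb).mono (by omega)
    by_cases h2b : s < 2 * b
    · obtain ⟨x, hx, y, hy, rfl⟩ := hpair s hbs h2b
      have hl : 1 ≤ l := by
        by_contra! hl
        simp [Nat.lt_one_iff.mp hl] at hs
        omega
      exact ((isSumOfAtMost_one_of_mem_range hx).add
        (isSumOfAtMost_one_of_mem_range hy)).mono (by omega)
    · have := (ih (s - b) (by omega) (by omega)).add (isSumOfAtMost_one_of_mem_range hb)
      rwa [Nat.sub_add_cancel hbs.le] at this

def semigroupGens (k : ℕ) : Fin k ⊕ Fin (2 * k + 1) → ℕ :=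
  Sum.elim (fun i => 2 * (k + i) + 1) (fun i => 4 * k + i + 1)

section semigroupGens

variable {k : ℕ}

theorem range_semigroupGens (hk : 1 ≤ k) :
    Set.range (semigroupGens k) = {n : ℕ | ∃ i : ℕ, i ≤ k - 1 ∧ n = 2 * (k + i) + 1} ∪
      {n : ℕ | ∃ i : ℕ, i ≤ 2 * k ∧ n = 4 * k + i + 1} := by
  rw [semigroupGens, Set.Sum.elim_range]
  congr 1 <;> ext n <;> simp only [Set.mem_range, Set.mem_ofPred_eq]
  · exact ⟨fun ⟨i, hi⟩ => ⟨i, by omega, hi.symm⟩, fun ⟨i, hi, hn⟩ => ⟨⟨i, by omega⟩, hn.symm⟩⟩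
  · exact ⟨fun ⟨i, hi⟩ => ⟨i, by omega, hi.symm⟩, fun ⟨i, hi, hn⟩ => ⟨⟨i, by omega⟩, hn.symm⟩⟩

theorem range_semigroupGens_subset_Ici : Set.range (semigroupGens k) ⊆ Set.Ici (2 * k + 1) := by
  rintro _ ⟨i | i, rfl⟩ <;> simp only [semigroupGens, Sum.elim_inl, Sum.elim_inr, Set.mem_Ici] <;>
    omega

theorem Icc_subset_range_semigroupGens :
    Set.Icc (4 * k + 1) (6 * k + 1) ⊆ Set.range (semigroupGens k) :=
  fun n hn => ⟨.inr ⟨n - (4 * k + 1), by grind⟩, by simp only [semigroupGens]; grind⟩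

theorem mem_range_semigroupGens_of_one_le (hk : 1 ≤ k) :
    2 * k + 1 ∈ Set.range (semigroupGens k) :=
  ⟨.inl ⟨0, hk⟩, by simp [semigroupGens]⟩

theorem exists_mem_range_semigroupGens_add_eq (hk : 1 ≤ k) {s : ℕ} (hs₁ : 6 * k + 1 < s)
    (hs₂ : s < 2 * (6 * k + 1)) :
    ∃ x ∈ Set.range (semigroupGens k), ∃ y ∈ Set.range (semigroupGens k), s = x + y := by
  have hI := @Icc_subset_range_semigroupGens k
  by_cases hs : s ≤ 8 * k + 2
  · exact ⟨_, mem_range_semigroupGens_of_one_le hk, s - (2 * k + 1), hI ⟨by omega, by omega⟩,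
      by omega⟩
  · exact ⟨s / 2, hI ⟨by omega, by omega⟩, s - s / 2, hI ⟨by omega, by omega⟩, by omega⟩

theorem closure_semigroupGens_subset :
    (AddSubmonoid.closure (Set.range (semigroupGens k)) : Set ℕ) ⊆
      {0} ∪ Set.range (semigroupGens k) ∪ Set.Ici (6 * k + 1) :=
  closure_subset_of_Ico_subset range_semigroupGens_subset_Ici
    fun _ hn => Icc_subset_range_semigroupGens ⟨by grind, by grind⟩

theorem isSumOfAtMost_semigroupGens (hk : 1 ≤ k) {l s : ℕ} (hl : 1 ≤ l)
    (hs : s ∈ {0} ∪ Set.range (semigroupGens k) ∪ Set.Ici (6 * k + 1))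
    (hsl : s ≤ l * (6 * k + 1)) : IsSumOfAtMost (semigroupGens k) l s := by
  rcases hs with (rfl | hs) | hs
  · exact isSumOfAtMost_zero _ l
  · exact (isSumOfAtMost_one_of_mem_range hs).mono hl
  · exact isSumOfAtMost_of_le_mul (Icc_subset_range_semigroupGens ⟨by omega, le_rfl⟩)
      (fun _ => exists_mem_range_semigroupGens_add_eq hk) l s hs hsl

end semigroupGens

/-- for `k₀ ≥ 1`, let `S` be the numerical semigroup generated by
`A = {2(k₀+i)+1 : 0 ≤ i ≤ k₀−1} ∪ {4k₀+i+1 : 0 ≤ i ≤ 2k₀}`.  Then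
(a) `S = {0} ∪ A ∪ {n : n ≥ 6k₀+1}`, and
(b) for every `l ≥ 1`, every `s ∈ S` with `s ≤ l·(6k₀+1)` is an ℕ-linear
combination of the generators in `A` whose coefficients sum to at most `l`. -/
theorem stmt18 (k₀ : ℕ) (hk₀ : 1 ≤ k₀)
    (A : Set ℕ)
    (hA : A = {n : ℕ | ∃ i : ℕ, i ≤ k₀ - 1 ∧ n = 2 * (k₀ + i) + 1} ∪
              {n : ℕ | ∃ i : ℕ, i ≤ 2 * k₀ ∧ n = 4 * k₀ + i + 1}) :
    ((AddSubmonoid.closure A : AddSubmonoid ℕ) : Set ℕ)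
        = {0} ∪ A ∪ {n : ℕ | 6 * k₀ + 1 ≤ n} ∧
    ∀ l : ℕ, 1 ≤ l → ∀ s : ℕ, s ∈ AddSubmonoid.closure A → s ≤ l * (6 * k₀ + 1) →
      ∃ c : Fin k₀ → ℕ, ∃ e : Fin (2 * k₀ + 1) → ℕ,
        s = (∑ i, c i * (2 * (k₀ + (i : ℕ)) + 1)) +
            (∑ i, e i * (4 * k₀ + (i : ℕ) + 1)) ∧
        (∑ i, c i) + (∑ i, e i) ≤ l := by
  rw [← range_semigroupGens hk₀] at hA
  subst hA
  refine ⟨closure_semigroupGens_subset.antisymm ?_, fun l hl s hs hsl => ?_⟩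
  · rintro n ((rfl | hn) | hn)
    · exact zero_mem _
    · exact AddSubmonoid.subset_closure hn
    · have hn' : 6 * k₀ + 1 ≤ n := hn
      exact (isSumOfAtMost_semigroupGens hk₀ (by omega) (.inr hn)
        (Nat.le_mul_of_pos_right n (by omega))).mem_closure
  · obtain ⟨c, hc, hlen⟩ :=
      isSumOfAtMost_semigroupGens hk₀ hl (closure_semigroupGens_subset hs) hsl
    refine ⟨c ∘ Sum.inl, c ∘ Sum.inr, ?_, ?_⟩
    · simpa [Fintype.sum_sum_type, semigroupGens] using hc
    · simpa [Fintype.sum_sum_type] using hlen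
end

section
/- Let k be a field, R = k[x,y], J = ⟨y^4, xy^3, x^3y, x^4⟩ ⊆ R, and I = ⟨y^3, x^3⟩ ⊆ R. Then J ⊆ I, I is Ratliff-Rush (i.e., ⋃_{l ≥ 1} (I^{l+1} : I^l) = I), and x^2y^2 ∈ ⋃_{l ≥ 1} (J^{l+1} : J^l) while x^2y^2 ∉ I; in particular J ⊆ I does not imply J̃ ⊆ Ĩ, so the Ratliff-Rush association is not order-preserving. -/
open MvPolynomial

lemma pow_le_mono {K : Type*} [Field K] (m : ℕ) :
    (Ideal.span ({X 1 ^ 3, X 0 ^ 3} : Set (MvPolynomial (Fin 2) K))) ^ m ≤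
      Ideal.span ((fun s => monomial s (1 : K)) ''
        {f | ∃ i j : ℕ, i + j = m ∧ f = Finsupp.single 0 (3*i) + Finsupp.single 1 (3*j)}) := by
  induction m with
  | zero =>
    simp only [pow_zero, Ideal.one_eq_top]
    intro z _
    have h0 : (0 : Fin 2 →₀ ℕ) ∈ {f | ∃ i j : ℕ, i + j = 0 ∧
        f = Finsupp.single 0 (3*i) + Finsupp.single 1 (3*j)} := ⟨0, 0, by simp, by simp⟩
    have : (1 : MvPolynomial (Fin 2) K) ∈ Ideal.span ((fun s => monomial s (1 : K)) ''
        {f | ∃ i j : ℕ, i + j = 0 ∧ f = Finsupp.single 0 (3*i) + Finsupp.single 1 (3*j)}) := by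
      refine Ideal.subset_span ⟨0, h0, ?_⟩
      simp
    simpa using Ideal.mul_mem_left _ z this
  | succ m ih =>
    rw [pow_succ]
    calc _ ≤ Ideal.span ((fun s => monomial s (1 : K)) ''
            {f | ∃ i j : ℕ, i + j = m ∧ f = Finsupp.single 0 (3*i) + Finsupp.single 1 (3*j)}) *
          Ideal.span ({X 1 ^ 3, X 0 ^ 3} : Set (MvPolynomial (Fin 2) K)) :=
            Ideal.mul_mono_left ih
      _ ≤ _ := by
        have hX : Ideal.span ({X 1 ^ 3, X 0 ^ 3} : Set (MvPolynomial (Fin 2) K)) =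
            Ideal.span ((fun s => monomial s (1 : K)) ''
              ({Finsupp.single 1 3, Finsupp.single 0 3} : Set (Fin 2 →₀ ℕ))) := by
          rw [Set.image_insert_eq, Set.image_singleton]
          simp [X_pow_eq_monomial]
        rw [hX, Ideal.span_mul_span']
        rw [Ideal.span_le]
        rintro z hz
        rw [Set.mem_mul] at hz
        obtain ⟨a, ⟨s, hs, rfl⟩, b, ⟨t, ht, rfl⟩, rfl⟩ := hz
        obtain ⟨i, j, hij, rfl⟩ := hs
        refine Ideal.subset_span ?_
        rcases ht with rfl | rfl
        · refine ⟨_, ⟨i, j+1, by omega, ?_⟩, by rw [monomial_mul, mul_one]⟩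
          rw [add_assoc, ← Finsupp.single_add]
          ring_nf
        · refine ⟨_, ⟨i+1, j, by omega, ?_⟩, by rw [monomial_mul, mul_one]⟩
          rw [add_comm (Finsupp.single 0 (3*i) + _), ← add_assoc, ← Finsupp.single_add,
            add_comm (Finsupp.single 0 _)]
          ring_nf
          exact add_comm _ _

lemma key {K : Type*} [Field K] (l : ℕ) (hl : 1 ≤ l) (r : MvPolynomial (Fin 2) K)
    (h : r * (X 0 ^ 3) ^ l ∈
      (Ideal.span ({X 1 ^ 3, X 0 ^ 3} : Set (MvPolynomial (Fin 2) K))) ^ (l + 1)) :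
    r ∈ Ideal.span ({X 1 ^ 3, X 0 ^ 3} : Set (MvPolynomial (Fin 2) K)) := by
  have hI : Ideal.span ({X 1 ^ 3, X 0 ^ 3} : Set (MvPolynomial (Fin 2) K)) =
      Ideal.span ((fun s => monomial s (1 : K)) ''
        ({Finsupp.single 1 3, Finsupp.single 0 3} : Set (Fin 2 →₀ ℕ))) := by
    rw [Set.image_insert_eq, Set.image_singleton]
    simp [X_pow_eq_monomial]
  have h2 := pow_le_mono (K := K) (l + 1) h
  rw [mem_ideal_span_monomial_image] at h2
  rw [hI, mem_ideal_span_monomial_image]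
  intro d hd
  -- d + single 0 (3l) is in the support of r * X0^(3l)
  have hc : coeff (d + Finsupp.single 0 (3 * l)) (r * (X 0 ^ 3) ^ l) = coeff d r := by
    rw [← pow_mul, X_pow_eq_monomial, coeff_mul_monomial, mul_one]
  have hmem : d + Finsupp.single 0 (3 * l) ∈ (r * (X 0 ^ 3) ^ l).support := by
    rw [MvPolynomial.mem_support_iff, hc]
    exact MvPolynomial.mem_support_iff.mp hd
  obtain ⟨si, ⟨i, j, hij, rfl⟩, hle⟩ := h2 _ hmem
  rw [Finsupp.le_def] at hle
  have h0 := hle 0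
  have h1 := hle 1
  simp [Finsupp.add_apply, Finsupp.single_apply] at h0 h1
  rcases Nat.eq_zero_or_pos j with rfl | hj
  · refine ⟨Finsupp.single 0 3, by simp, ?_⟩
    rw [Finsupp.single_le_iff]
    omega
  · refine ⟨Finsupp.single 1 3, by simp, ?_⟩
    rw [Finsupp.single_le_iff]
    omega
lemma rr_mem {R : Type*} [CommRing R] {I : Ideal R} {z : R} :
    z ∈ RRset I ↔ ∃ l : ℕ, 1 ≤ l ∧ z ∈ (I ^ (l + 1)).colon ((I ^ l : Ideal R) : Set R) := by
  simp [RRset, Set.mem_iUnion, SetLike.mem_coe]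

/-- for `J = ⟨y^4, xy^3, x^3y, x^4⟩ ⊆ I = ⟨y^3, x^3⟩ ⊆ K[x,y]`,
`I` is Ratliff-Rush and `x²y² ∈ J̃ \ I`; hence the Ratliff-Rush association is
not order-preserving. -/
theorem stmt19 {K : Type*} [Field K]
    (J I : Ideal (MvPolynomial (Fin 2) K))
    (hJ : J = Ideal.span {X 1 ^ 4, X 0 * X 1 ^ 3, X 0 ^ 3 * X 1, X 0 ^ 4})
    (hI : I = Ideal.span {X 1 ^ 3, X 0 ^ 3}) :
    J ≤ I ∧
    RRset I = (I : Set (MvPolynomial (Fin 2) K)) ∧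
    (X 0 ^ 2 * X 1 ^ 2 : MvPolynomial (Fin 2) K) ∈ RRset J ∧
    (X 0 ^ 2 * X 1 ^ 2 : MvPolynomial (Fin 2) K) ∉ I := by
  have hy3 : (X 1 ^ 3 : MvPolynomial (Fin 2) K) ∈ I := hI ▸ Ideal.subset_span (by simp)
  have hx3 : (X 0 ^ 3 : MvPolynomial (Fin 2) K) ∈ I := hI ▸ Ideal.subset_span (by simp)
  refine ⟨?_, ?_, ?_, ?_⟩
  · -- J ≤ I
    rw [hJ, Ideal.span_le]
    rintro z hz
    simp only [Set.mem_insert_iff, Set.mem_singleton_iff] at hz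
    rcases hz with rfl | rfl | rfl | rfl
    · have := Ideal.mul_mem_left I (X 1) hy3
      convert (SetLike.mem_coe.mpr this) using 1; ring
    · exact Ideal.mul_mem_left I (X 0) hy3
    · rw [mul_comm]
      exact Ideal.mul_mem_left I (X 1) hx3
    · have := Ideal.mul_mem_left I (X 0) hx3
      convert (SetLike.mem_coe.mpr this) using 1; ring
  · -- RRset I = I
    ext z
    rw [SetLike.mem_coe, rr_mem]
    constructor
    · rintro ⟨l, hl, hz⟩
      have hxl : ((X 0 ^ 3 : MvPolynomial (Fin 2) K)) ^ l ∈ I ^ l :=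
        Ideal.pow_mem_pow hx3 l
      have := Submodule.mem_colon.mp hz _ hxl
      rw [smul_eq_mul] at this
      rw [hI]
      exact key l hl z (by rwa [← hI])
    · intro hz
      refine ⟨1, le_refl 1, Submodule.mem_colon.mpr fun p hp => ?_⟩
      rw [smul_eq_mul]
      have : z * p ∈ I * I ^ 1 := Ideal.mul_mem_mul hz hp
      simpa [pow_succ, mul_comm] using this
  · -- x^2 y^2 ∈ RRset J
    rw [rr_mem]
    refine ⟨1, le_refl 1, Submodule.mem_colon.mpr fun p hp => ?_⟩
    rw [smul_eq_mul]
    rw [show (1+1 : ℕ) = 2 from rfl, pow_two]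
    rw [pow_one] at hp
    have hgen : ∀ g ∈ ({X 1 ^ 4, X 0 * X 1 ^ 3, X 0 ^ 3 * X 1, X 0 ^ 4} :
        Set (MvPolynomial (Fin 2) K)), X 0 ^ 2 * X 1 ^ 2 * g ∈ J * J := by
      have m1 : (X 1 ^ 4 : MvPolynomial (Fin 2) K) ∈ J := hJ ▸ Ideal.subset_span (by simp)
      have m2 : (X 0 * X 1 ^ 3 : MvPolynomial (Fin 2) K) ∈ J := hJ ▸ Ideal.subset_span (by simp)
      have m3 : (X 0 ^ 3 * X 1 : MvPolynomial (Fin 2) K) ∈ J := hJ ▸ Ideal.subset_span (by simp)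
      have m4 : (X 0 ^ 4 : MvPolynomial (Fin 2) K) ∈ J := hJ ▸ Ideal.subset_span (by simp)
      rintro g hg
      simp only [Set.mem_insert_iff, Set.mem_singleton_iff] at hg
      rcases hg with rfl | rfl | rfl | rfl
      · have := Ideal.mul_mem_mul m2 m2
        convert this using 1; ring
      · have := Ideal.mul_mem_mul m1 m3
        convert this using 1; ring
      · have := Ideal.mul_mem_mul m2 m4
        convert this using 1; ring
      · have := Ideal.mul_mem_mul m3 m3
        convert this using 1; ring
    -- reduce to generators
    have : p ∈ (J * J).colon ((Ideal.span {X 0 ^ 2 * X 1 ^ 2} : Ideal (MvPolynomial (Fin 2) K)) : Set (MvPolynomial (Fin 2) K)) := by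
      revert hp
      rw [hJ]
      refine fun hp => Ideal.span_le.mpr (fun g hg => ?_) hp
      rw [SetLike.mem_coe, Ideal.mem_colon_span_singleton, ← hJ]
      have := hgen g hg
      convert this using 1
      ring
    rw [Ideal.mem_colon_span_singleton] at this
    convert this using 1
    ring
  · -- x^2 y^2 ∉ I
    rw [hI]
    intro hmem
    rw [show (Ideal.span ({X 1 ^ 3, X 0 ^ 3} : Set (MvPolynomial (Fin 2) K))) =
        Ideal.span ((fun s => monomial s (1 : K)) ''
          ({Finsupp.single 1 3, Finsupp.single 0 3} : Set (Fin 2 →₀ ℕ))) by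
          rw [Set.image_insert_eq, Set.image_singleton]; simp [X_pow_eq_monomial],
      mem_ideal_span_monomial_image] at hmem
    have hd : (Finsupp.single 0 2 + Finsupp.single 1 2 : Fin 2 →₀ ℕ) ∈
        (X 0 ^ 2 * X 1 ^ 2 : MvPolynomial (Fin 2) K).support := by
      rw [MvPolynomial.mem_support_iff]
      rw [X_pow_eq_monomial, X_pow_eq_monomial, monomial_mul, mul_one, coeff_monomial]
      simp
    obtain ⟨si, hsi, hle⟩ := hmem _ hd
    rw [Finsupp.le_def] at hle
    simp only [Set.mem_insert_iff, Set.mem_singleton_iff] at hsi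
    rcases hsi with rfl | rfl
    · have := hle 1
      simp [Finsupp.single_apply, Finsupp.add_apply] at this
    · have := hle 0
      simp [Finsupp.single_apply, Finsupp.add_apply] at this
end
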